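/- arXiv:1204.3661 — 8 statements merged into one kernel-verified Lean document; each statement's English description precedes it below -/
import Mathlib

section
/- Under the assumptions $\lambda^*(X) > 0$, $\sigma_H^2(X) > 0$, and $\sum_x p(x)|\ln p(x)|^3 < \infty$, there exists $\delta^* > 0$ such that for all $\delta \in (0,\delta^*]$ and all positive integers $n$, $\Pr\{-\frac{1}{n}\ln p(X^n) > H(X)+\delta\} \leq e^{-n(\frac{\delta^2}{2\sigma_H^2(X)} + O(\delta^3))}$, where the $O(\delta^3)$ term is uniform in $n$. -/
/-!
Chernoff: for `l ≥ 0`, `Pr{-ln p(Xⁿ) > n(H+δ)} ≤ e^{-n l (H+δ)} Λ(l)ⁿ`, where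
`Λ(l) = E e^{l·(-ln p(X))} = Σ p^{1-l}`. Pick `l₀ > 0` with `Λ(l₀) < ∞`. Expanding `e^{lt}` to
second order with remainder `t³ e^{lt}`, and absorbing the remainder into `e^{l₀ t}` when
`l ≤ l₀/2`, gives `Λ(l) ≤ exp(lH + l²σ²/2 + M l³)` with `M = 48 Λ(l₀) / l₀³`, uniformly on
`[0, l₀/2]`. Taking `l = δ/σ²` yields the exponent `δ²/(2σ²) - (M/σ⁶) δ³`.
-/

open scoped BigOperators

/-- The right rate function `r_X(δ) = sup_{λ≥0} [λ(H(X)+δ) - ln Σ_x p(x)^{1-λ}]`. -/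
noncomputable def rateR {α : Type*} (p : α → ℝ) (H δ : ℝ) : ℝ :=
  sSup {y : ℝ | ∃ l : ℝ, 0 ≤ l ∧ Summable (fun x => p x * p x ^ (-l)) ∧
      y = l * (H + δ) - Real.log (∑' x, p x * p x ^ (-l))}

open Real

theorem exp_le_quadratic_add_cube_mul_exp {t : ℝ} (ht : 0 ≤ t) :
    exp t ≤ 1 + t + t ^ 2 / 2 + t ^ 3 * exp t := by
  rcases le_or_gt t 1 with ht1 | ht1
  · have h := exp_bound' ht ht1 (n := 3) (by norm_num)
    norm_num [Finset.sum_range_succ, Nat.factorial] at h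
    nlinarith [one_le_exp ht, pow_nonneg ht 3]
  · nlinarith [one_lt_pow₀ ht1 (by norm_num : 3 ≠ 0), exp_pos t, pow_nonneg ht 2]

/-- `48 = 3! · 2³` comes from `(l₀ t / 2)³ / 3! ≤ e^{l₀ t / 2}`. -/
theorem exp_mul_le_quadratic_add_cube_mul_exp {t l l₀ : ℝ} (ht : 0 ≤ t) (hl : 0 ≤ l)
    (hl₀ : 0 < l₀) (hll₀ : 2 * l ≤ l₀) :
    exp (l * t) ≤ 1 + l * t + l ^ 2 * t ^ 2 / 2 + l ^ 3 * (48 / l₀ ^ 3 * exp (l₀ * t)) := by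
  have hcube : t ^ 3 ≤ 48 / l₀ ^ 3 * exp (l₀ / 2 * t) := by
    have h := pow_div_factorial_le_exp (x := l₀ / 2 * t) (mul_nonneg (half_pos hl₀).le ht) 3
    rw [div_mul_eq_mul_div, le_div_iff₀ (by positivity)]
    norm_num [Nat.factorial] at h
    nlinarith [h]
  have hexp : exp (l * t) ≤ exp (l₀ / 2 * t) := exp_le_exp.2 (by nlinarith)
  have htail : t ^ 3 * exp (l * t) ≤ 48 / l₀ ^ 3 * exp (l₀ * t) := by
    calc t ^ 3 * exp (l * t) ≤ 48 / l₀ ^ 3 * exp (l₀ / 2 * t) * exp (l₀ / 2 * t) := by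
          gcongr
      _ = 48 / l₀ ^ 3 * exp (l₀ * t) := by rw [mul_assoc, ← exp_add]; ring_nf
  calc exp (l * t) ≤ 1 + l * t + (l * t) ^ 2 / 2 + (l * t) ^ 3 * exp (l * t) :=
        exp_le_quadratic_add_cube_mul_exp (mul_nonneg hl ht)
    _ ≤ _ := by
      rw [mul_pow, mul_pow, mul_assoc]
      gcongr

theorem one_add_le_exp_of_nonneg {a b c : ℝ} (ha : 0 ≤ a) (hbc : 0 ≤ b / 2 + c) :
    1 + a + (b + a ^ 2) / 2 + c ≤ exp (a + b / 2 + c) := by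
  have h := quadratic_le_exp_of_nonneg (add_nonneg ha hbc |>.trans_eq (add_assoc a _ _).symm)
  nlinarith [mul_self_le_mul_self ha (le_add_of_nonneg_right hbc : a ≤ a + (b / 2 + c))]

theorem HasSum.finPi_prod {α : Type*} {f : α → ℝ} {s : ℝ} (hf : HasSum f s) (hf₀ : 0 ≤ f)
    (n : ℕ) : HasSum (fun xs : Fin n → α => ∏ i, f (xs i)) (s ^ n) := by
  induction n with
  | zero => simp
  | succ n ih =>
    have hg : 0 ≤ fun xs : Fin n → α => ∏ i, f (xs i) := fun xs =>
      Finset.prod_nonneg fun i _ => hf₀ (xs i)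
    have hsum := hf.summable.mul_of_nonneg ih.summable hf₀ hg
    have hcons := hf.mul ih hsum
    have hcomp : (fun xs : Fin (n + 1) → α => ∏ i, f (xs i)) =
        (fun q : α × (Fin n → α) => f q.1 * ∏ i, f (q.2 i)) ∘ (Fin.consEquiv fun _ => α).symm :=
      funext fun xs => Fin.prod_univ_succ _
    rw [pow_succ', hcomp]
    exact (Fin.consEquiv fun _ => α).symm.hasSum_iff.2 hcons

theorem mul_rpow_neg_eq_mul_exp {w : ℝ} (hw : 0 ≤ w) (l : ℝ) :
    w * w ^ (-l) = w * exp (l * -log w) := by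
  rcases hw.eq_or_lt with rfl | hw
  · simp
  · rw [rpow_def_of_pos hw]; ring_nf

theorem le_exp_neg_mul_mul_mul_rpow_neg {w a l : ℝ} (hw : 0 ≤ w) (hl : 0 ≤ l)
    (ha : a < -log w) : w ≤ exp (-(l * a)) * (w * w ^ (-l)) := by
  rw [mul_rpow_neg_eq_mul_exp hw, mul_left_comm, ← exp_add]
  refine le_mul_of_one_le_right hw (one_le_exp ?_)
  nlinarith

theorem mul_rpow_neg_le_taylor {w l l₀ : ℝ} (hw₀ : 0 ≤ w) (hw₁ : w ≤ 1) (hl : 0 ≤ l)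
    (hl₀ : 0 < l₀) (hll₀ : 2 * l ≤ l₀) :
    w * w ^ (-l) ≤ w + l * (w * -log w) + l ^ 2 / 2 * (w * log w ^ 2) +
      l ^ 3 * (48 / l₀ ^ 3) * (w * w ^ (-l₀)) := by
  rw [mul_rpow_neg_eq_mul_exp hw₀, mul_rpow_neg_eq_mul_exp hw₀]
  calc w * exp (l * -log w)
      ≤ w * (1 + l * -log w + l ^ 2 * (-log w) ^ 2 / 2 +
          l ^ 3 * (48 / l₀ ^ 3 * exp (l₀ * -log w))) :=
        mul_le_mul_of_nonneg_left (exp_mul_le_quadratic_add_cube_mul_exp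
          (neg_nonneg.2 (log_nonpos hw₀ hw₁)) hl hl₀ hll₀) hw₀
    _ = _ := by ring

section InfoMGF

variable {α : Type*} {p : α → ℝ}

/-- `Λ(l) = E e^{l·(-ln p(X))}`, finite for `0 ≤ l < λ*(X)`. -/
noncomputable def infoMGF (p : α → ℝ) (l : ℝ) : ℝ := ∑' x, p x * p x ^ (-l)

theorem one_le_infoMGF (hp₀ : ∀ x, 0 ≤ p x) (hp₁ : HasSum p 1) {l : ℝ} (hl : 0 ≤ l)
    (hsum : Summable fun x => p x * p x ^ (-l)) : 1 ≤ infoMGF p l := by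
  refine hasSum_le (fun x => ?_) hp₁ hsum.hasSum
  rw [mul_rpow_neg_eq_mul_exp (hp₀ x)]
  exact le_mul_of_one_le_right (hp₀ x) <| one_le_exp <|
    mul_nonneg hl <| neg_nonneg.2 <| log_nonpos (hp₀ x) (le_hasSum hp₁ x fun j _ => hp₀ j)

theorem summable_and_infoMGF_le_exp (hp₀ : ∀ x, 0 ≤ p x) (hp₁ : HasSum p 1) {H S₂ : ℝ}
    (hH : HasSum (fun x => p x * -log (p x)) H) (hS₂ : HasSum (fun x => p x * log (p x) ^ 2) S₂)
    (hV : 0 ≤ S₂ - H ^ 2) {l₀ : ℝ} (hl₀ : 0 < l₀) (hsum₀ : Summable fun x => p x * p x ^ (-l₀))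
    {l : ℝ} (hl : 0 ≤ l) (hll₀ : 2 * l ≤ l₀) :
    (Summable fun x => p x * p x ^ (-l)) ∧
      infoMGF p l ≤
        exp (l * H + l ^ 2 * (S₂ - H ^ 2) / 2 + l ^ 3 * (48 / l₀ ^ 3 * infoMGF p l₀)) := by
  have hp_le : ∀ x, p x ≤ 1 := fun x => le_hasSum hp₁ x fun j _ => hp₀ j
  have htaylor := (((hp₁.add (hH.mul_left l)).add (hS₂.mul_left (l ^ 2 / 2))).add
    (hsum₀.hasSum.mul_left (l ^ 3 * (48 / l₀ ^ 3))))
  have hpt := fun x => mul_rpow_neg_le_taylor (hp₀ x) (hp_le x) hl hl₀ hll₀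
  have hsum : Summable fun x => p x * p x ^ (-l) :=
    htaylor.summable.of_nonneg_of_le (fun x => mul_nonneg (hp₀ x) (rpow_nonneg (hp₀ x) _)) hpt
  refine ⟨hsum, (hasSum_le hpt hsum.hasSum htaylor).trans ?_⟩
  have hH₀ : 0 ≤ H := hasSum_le
    (fun x => mul_nonneg (hp₀ x) (neg_nonneg.2 (log_nonpos (hp₀ x) (hp_le x)))) hasSum_zero hH
  have hM₀ : 0 ≤ infoMGF p l₀ := zero_le_one.trans (one_le_infoMGF hp₀ hp₁ hl₀.le hsum₀)
  have h := one_add_le_exp_of_nonneg (a := l * H) (b := l ^ 2 * (S₂ - H ^ 2))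
    (c := l ^ 3 * (48 / l₀ ^ 3 * infoMGF p l₀)) (by positivity) (by positivity)
  unfold infoMGF at h ⊢
  exact le_of_eq_of_le (by ring) h

theorem tsum_indicator_le_exp_mul_infoMGF_pow (hp₀ : ∀ x, 0 ≤ p x) {l : ℝ} (hl : 0 ≤ l)
    (hsum : Summable fun x => p x * p x ^ (-l)) {n : ℕ} (hn : 0 < n) (a : ℝ) :
    ∑' xs : Fin n → α, {xs : Fin n → α | -(1 / (n : ℝ)) * log (∏ i, p (xs i)) > a}.indicator
        (fun xs => ∏ i, p (xs i)) xs ≤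
      exp (-(l * (n * a))) * infoMGF p l ^ n := by
  set S := {xs : Fin n → α | -(1 / (n : ℝ)) * log (∏ i, p (xs i)) > a}
  have hpl : ∀ x, 0 ≤ p x * p x ^ (-l) := fun x => mul_nonneg (hp₀ x) (rpow_nonneg (hp₀ x) _)
  have hpt : ∀ xs, S.indicator (fun xs => ∏ i, p (xs i)) xs ≤
      exp (-(l * (n * a))) * ∏ i, p (xs i) * p (xs i) ^ (-l) := by
    intro xs
    refine Set.indicator_apply_le' (fun hxs => ?_) fun _ => ?_
    · have hw : 0 ≤ ∏ i, p (xs i) := Finset.prod_nonneg fun i _ => hp₀ (xs i)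
      rw [Finset.prod_mul_distrib, Real.finsetProd_rpow _ _ (fun i _ => hp₀ (xs i))]
      refine le_exp_neg_mul_mul_mul_rpow_neg hw hl ?_
      have hn' : (0 : ℝ) < n := Nat.cast_pos.2 hn
      calc n * a < n * (-(1 / n) * log (∏ i, p (xs i))) := mul_lt_mul_of_pos_left hxs hn'
        _ = -log (∏ i, p (xs i)) := by field_simp
    · exact mul_nonneg (exp_pos _).le (Finset.prod_nonneg fun i _ => hpl (xs i))
  have hbound := (hsum.hasSum.finPi_prod hpl n).mul_left (exp (-(l * (n * a))))
  have hind : Summable fun xs => S.indicator (fun xs => ∏ i, p (xs i)) xs :=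
    hbound.summable.of_nonneg_of_le
      (Set.indicator_nonneg fun xs _ => Finset.prod_nonneg fun i _ => hp₀ (xs i)) hpt
  exact hasSum_le hpt hind.hasSum hbound

end InfoMGF

theorem stmt2_general {α : Type} (p : α → ℝ)
    (hp0 : ∀ x, 0 ≤ p x) (hp1 : HasSum p 1)
    (H S2 : ℝ)
    (hH : HasSum (fun x => p x * (-Real.log (p x))) H)
    (hS2 : HasSum (fun x => p x * (Real.log (p x)) ^ 2) S2)
    (hlstar : ∃ l : ℝ, 0 < l ∧ Summable (fun x => p x * p x ^ (-l)))
    (hvar : 0 < S2 - H ^ 2) :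
    ∃ δstar > (0 : ℝ), ∃ K > (0 : ℝ), ∀ δ : ℝ, 0 < δ → δ ≤ δstar →
      ∀ n : ℕ, 0 < n →
      (∑' xs : Fin n → α,
          Set.indicator {xs : Fin n → α |
              -(1 / (n : ℝ)) * Real.log (∏ i, p (xs i)) > H + δ}
            (fun xs => ∏ i, p (xs i)) xs)
        ≤ Real.exp (-(n : ℝ) * (δ ^ 2 / (2 * (S2 - H ^ 2)) - K * δ ^ 3)) := by
  obtain ⟨l₀, hl₀, hsum₀⟩ := hlstar
  set V := S2 - H ^ 2
  set M := 48 / l₀ ^ 3 * infoMGF p l₀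
  have hM : 0 < M :=
    mul_pos (by positivity) (zero_lt_one.trans_le (one_le_infoMGF hp0 hp1 hl₀.le hsum₀))
  refine ⟨l₀ / 2 * V, by positivity, M / V ^ 3, by positivity, fun δ hδ hδV n hn => ?_⟩
  -- `l = δ / V` maximises `l δ - l² V / 2`, the quadratic part of the exponent
  set l := δ / V with hl_def
  have hl : 0 ≤ l := by positivity
  have hll₀ : 2 * l ≤ l₀ := by
    rw [hl_def, mul_div_assoc', div_le_iff₀ hvar]
    linarith
  obtain ⟨hsum, hmgf⟩ := summable_and_infoMGF_le_exp hp0 hp1 hH hS2 hvar.le hl₀ hsum₀ hl hll₀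
  calc _ ≤ exp (-(l * (n * (H + δ)))) * infoMGF p l ^ n :=
        tsum_indicator_le_exp_mul_infoMGF_pow hp0 hl hsum hn (H + δ)
    _ ≤ exp (-(l * (n * (H + δ)))) * exp (l * H + l ^ 2 * V / 2 + l ^ 3 * M) ^ n := by
        gcongr
        exact zero_le_one.trans (one_le_infoMGF hp0 hp1 hl hsum)
    _ = _ := by
        rw [← exp_nat_mul, ← exp_add]
        congr 1
        rw [hl_def]
        field_simp
        ring

/-- Weak right NEP, quadratic form: under `λ*(X) > 0`, `σ_H²(X) > 0` and finite third
log-moment, there exist `δ* > 0` and a constant `K` (uniform in `n`) such that for all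
`δ ∈ (0, δ*]` and all positive integers `n`,
`Pr{-(1/n) ln p(X^n) > H + δ} ≤ exp(-n (δ²/(2σ_H²(X)) - K δ³))`. -/
theorem stmt2 {α : Type} [Countable α] (p : α → ℝ)
    (hp0 : ∀ x, 0 ≤ p x) (hp1 : HasSum p 1)
    (H S2 : ℝ)
    (hH : HasSum (fun x => p x * (-Real.log (p x))) H)
    (hS2 : HasSum (fun x => p x * (Real.log (p x)) ^ 2) S2)
    (hlstar : ∃ l : ℝ, 0 < l ∧ Summable (fun x => p x * p x ^ (-l)))
    (hvar : 0 < S2 - H ^ 2)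
    (hM3 : Summable (fun x => p x * |Real.log (p x)| ^ 3)) :
    ∃ δstar > (0 : ℝ), ∃ K > (0 : ℝ), ∀ δ : ℝ, 0 < δ → δ ≤ δstar →
      ∀ n : ℕ, 0 < n →
      (∑' xs : Fin n → α,
          Set.indicator {xs : Fin n → α |
              -(1 / (n : ℝ)) * Real.log (∏ i, p (xs i)) > H + δ}
            (fun xs => ∏ i, p (xs i)) xs)
        ≤ Real.exp (-(n : ℝ) * (δ ^ 2 / (2 * (S2 - H ^ 2)) - K * δ ^ 3)) :=
  stmt2_general p hp0 hp1 H S2 hH hS2 hlstar hvar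
end

section
/- For any $\lambda \in [0,\lambda^*(X))$ and $\delta = \delta(\lambda)$, the supremum defining $r_X(\delta)$ is attained at $\lambda$: $r_X(\delta(\lambda)) = \lambda(H(X)+\delta(\lambda)) - \ln \sum_x p(x)^{1-\lambda}$; i.e., for every $\beta \geq 0$ with $\beta \neq \lambda$, $\beta(H(X)+\delta(\lambda)) - \ln\sum_x p(x)^{1-\beta} \leq \lambda(H(X)+\delta(\lambda)) - \ln\sum_x p(x)^{1-\lambda}$. -/
/-!
At `λ` the tilted law `p^{1-λ} / Z(λ)`, with `Z(β) = ∑ₓ p(x)^{1-β}`, has mean `H + δ(λ)` for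
`-ln p`. Since `p^{1-β} = p^{1-λ} e^{(β-λ)(-ln p)}`, Jensen's inequality for `exp` under the tilted
law gives `ln Z(β) ≥ ln Z(λ) + (β - λ)(H + δ(λ))`: the convex function `ln Z` lies above its
tangent at `λ`. This is exactly the claim that `β ↦ β(H + δ(λ)) - ln Z(β)` is maximal at `λ`.
-/

open scoped BigOperators

/-- The tilted mean shift `δ(λ)`. -/
noncomputable def dshift {α : Type*} (p : α → ℝ) (H l : ℝ) : ℝ :=
  (∑' x, (p x * p x ^ (-l)) * (-Real.log (p x))) / (∑' y, p y * p y ^ (-l)) - H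

open Real

section Jensen

variable {α : Type*} {w f : α → ℝ}

theorem tsum_mul_exp_div_le_tsum_mul_exp (hw : ∀ x, 0 ≤ w x) (hws : Summable w)
    (hwf : Summable fun x => w x * f x) (hwe : Summable fun x => w x * exp (f x)) :
    (∑' x, w x) * exp ((∑' x, w x * f x) / ∑' x, w x) ≤ ∑' x, w x * exp (f x) := by
  set Z := ∑' x, w x
  set c := (∑' x, w x * f x) / Z
  rcases (tsum_nonneg hw : 0 ≤ Z).eq_or_lt with hZ | hZ
  · rw [show Z = 0 from hZ.symm, zero_mul]
    exact tsum_nonneg fun x => mul_nonneg (hw x) (exp_pos _).le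
  have tangent : ∀ x, exp c * (w x + w x * f x - c * w x) ≤ w x * exp (f x) := fun x =>
    calc exp c * (w x + w x * f x - c * w x) = w x * (exp c * (f x - c + 1)) := by ring
      _ ≤ w x * (exp c * exp (f x - c)) := by
        gcongr
        · exact hw x
        · exact add_one_le_exp _
      _ = w x * exp (f x) := by rw [← exp_add, add_sub_cancel]
  calc Z * exp c = exp c * (Z + ∑' x, w x * f x - c * Z) := by
        rw [div_mul_cancel₀ _ hZ.ne']; ring
    _ = ∑' x, exp c * (w x + w x * f x - c * w x) := by
        rw [tsum_mul_left, Summable.tsum_sub (hws.add hwf) (hws.mul_left c),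
          Summable.tsum_add hws hwf, tsum_mul_left]
    _ ≤ ∑' x, w x * exp (f x) :=
        Summable.tsum_le_tsum tangent (((hws.add hwf).sub (hws.mul_left c)).mul_left _) hwe

end Jensen

theorem neg_log_le_rpow_neg_div {t ε : ℝ} (ht : 0 < t) (hε : 0 < ε) :
    -log t ≤ t ^ (-ε) / ε := by
  rw [← log_inv, rpow_neg ht.le, ← inv_rpow ht.le]
  exact log_le_rpow_div (inv_nonneg.2 ht.le) hε

theorem mul_rpow_neg_mul_exp_neg_log {t : ℝ} (ht : 0 ≤ t) (l β : ℝ) :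
    t * t ^ (-l) * exp ((β - l) * -log t) = t * t ^ (-β) := by
  rcases ht.eq_or_lt with rfl | ht
  · simp
  have hexp : exp ((β - l) * -log t) = t ^ (l - β) := by
    rw [rpow_def_of_pos ht]; ring_nf
  rw [hexp, mul_assoc, ← rpow_add ht]
  ring_nf

section Tilted

variable {α : Type*} {p : α → ℝ}

theorem summable_mul_rpow_neg_mul_neg_log (hp0 : ∀ x, 0 ≤ p x) (hp1 : ∀ x, p x ≤ 1)
    {l l' : ℝ} (hll' : l < l') (hs : Summable fun x => p x * p x ^ (-l')) :
    Summable fun x => p x * p x ^ (-l) * -log (p x) := by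
  have hε : 0 < l' - l := sub_pos.2 hll'
  refine Summable.of_nonneg_of_le (fun x => mul_nonneg (mul_nonneg (hp0 x) (rpow_nonneg (hp0 x) _))
    (neg_nonneg.2 (log_nonpos (hp0 x) (hp1 x)))) (fun x => ?_) (hs.mul_left (l' - l)⁻¹)
  rcases (hp0 x).eq_or_lt with h | h
  · simp [← h]
  calc p x * p x ^ (-l) * -log (p x) ≤ p x * p x ^ (-l) * (p x ^ (-(l' - l)) / (l' - l)) := by
        gcongr
        exact neg_log_le_rpow_neg_div h hε
    _ = (l' - l)⁻¹ * (p x * p x ^ (-l')) := by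
        rw [mul_assoc, ← mul_div_assoc, ← rpow_add h]; ring_nf

theorem one_le_tsum_mul_rpow_neg (hp0 : ∀ x, 0 ≤ p x) (hp1 : HasSum p 1) {l : ℝ} (hl : 0 ≤ l)
    (hs : Summable fun x => p x * p x ^ (-l)) : 1 ≤ ∑' x, p x * p x ^ (-l) := by
  refine hp1.tsum_eq ▸ Summable.tsum_le_tsum (fun x => ?_) hp1.summable hs
  rcases (hp0 x).eq_or_lt with h | h
  · simp [← h]
  exact le_mul_of_one_le_right (hp0 x) (one_le_rpow_of_pos_of_le_one_of_nonpos h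
    (le_hasSum hp1 x fun y _ => hp0 y) (neg_nonpos.2 hl))

theorem log_tsum_mul_rpow_neg_add_le (hp0 : ∀ x, 0 ≤ p x) (hp1 : HasSum p 1) {l β : ℝ}
    (hl0 : 0 ≤ l) (hl : Summable fun x => p x * p x ^ (-l))
    (hL : Summable fun x => p x * p x ^ (-l) * -log (p x))
    (hβ : Summable fun x => p x * p x ^ (-β)) :
    log (∑' x, p x * p x ^ (-l))
        + (β - l) * ((∑' x, p x * p x ^ (-l) * -log (p x)) / ∑' x, p x * p x ^ (-l))
      ≤ log (∑' x, p x * p x ^ (-β)) := by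
  have hZ : 0 < ∑' x, p x * p x ^ (-l) :=
    one_pos.trans_le (one_le_tsum_mul_rpow_neg hp0 hp1 hl0 hl)
  have hmean : ∑' x, p x * p x ^ (-l) * ((β - l) * -log (p x))
      = (β - l) * ∑' x, p x * p x ^ (-l) * -log (p x) := by
    rw [← tsum_mul_left]; congr 1 with x; ring
  have jensen := tsum_mul_exp_div_le_tsum_mul_exp (f := fun x => (β - l) * -log (p x))
    (fun x => mul_nonneg (hp0 x) (rpow_nonneg (hp0 x) _)) hl
    (by simpa only [mul_left_comm] using hL.mul_left (β - l))
    (by simpa only [mul_rpow_neg_mul_exp_neg_log (hp0 _)] using hβ)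
  simp only [mul_rpow_neg_mul_exp_neg_log (hp0 _), hmean] at jensen
  have := log_le_log (by positivity) jensen
  rwa [log_mul hZ.ne' (exp_pos _).ne', log_exp, mul_div_assoc] at this

end Tilted

theorem add_dshift {α : Type*} (p : α → ℝ) (H l : ℝ) :
    H + dshift p H l
      = (∑' x, p x * p x ^ (-l) * -log (p x)) / ∑' x, p x * p x ^ (-l) :=
  add_sub_cancel H _

theorem stmt4_general {α : Type} (p : α → ℝ)
    (hp0 : ∀ x, 0 ≤ p x) (hp1 : HasSum p 1)
    (H : ℝ)
    (lstar : ℝ)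
    (hsum : ∀ l : ℝ, 0 ≤ l → l < lstar → Summable (fun x => p x * p x ^ (-l)))
    (l : ℝ) (hl0 : 0 ≤ l) (hll : l < lstar) :
    (∀ β : ℝ, 0 ≤ β → Summable (fun x => p x * p x ^ (-β)) →
        β * (H + dshift p H l) - Real.log (∑' x, p x * p x ^ (-β))
          ≤ l * (H + dshift p H l) - Real.log (∑' x, p x * p x ^ (-l))) ∧
    rateR p H (dshift p H l)
      = l * (H + dshift p H l) - Real.log (∑' x, p x * p x ^ (-l)) := by
  have hl := hsum l hl0 hll
  obtain ⟨l', hll', hl'⟩ := exists_between hll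
  have hL := summable_mul_rpow_neg_mul_neg_log hp0 (fun x => le_hasSum hp1 x fun y _ => hp0 y)
    hll' (hsum l' (hl0.trans hll'.le) hl')
  have hmax : ∀ β : ℝ, 0 ≤ β → Summable (fun x => p x * p x ^ (-β)) →
      β * (H + dshift p H l) - log (∑' x, p x * p x ^ (-β))
        ≤ l * (H + dshift p H l) - log (∑' x, p x * p x ^ (-l)) := fun β _ hβ => by
    have := log_tsum_mul_rpow_neg_add_le hp0 hp1 hl0 hl hL hβ
    rw [add_dshift]
    linarith
  refine ⟨hmax, IsGreatest.csSup_eq ⟨⟨l, hl0, hl, rfl⟩, ?_⟩⟩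
  rintro _ ⟨β, hβ0, hβ, rfl⟩
  exact hmax β hβ0 hβ

/-- For `λ ∈ [0, λ*(X))` and `δ = δ(λ)`, the supremum defining `r_X(δ)` is attained
at `λ`: any other `β ≥ 0` (with convergent sum) gives a value no larger, and
`r_X(δ(λ)) = λ(H+δ(λ)) - ln Σ_x p(x)^{1-λ}`. -/
theorem stmt4 {α : Type} [Countable α] (p : α → ℝ)
    (hp0 : ∀ x, 0 ≤ p x) (hp1 : HasSum p 1)
    (H S2 : ℝ)
    (hH : HasSum (fun x => p x * (-Real.log (p x))) H)
    (hS2 : HasSum (fun x => p x * (Real.log (p x)) ^ 2) S2)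
    (hvar : 0 < S2 - H ^ 2)
    (hM3 : Summable (fun x => p x * |Real.log (p x)| ^ 3))
    (lstar : ℝ) (hlstar : 0 < lstar)
    (hsum : ∀ l : ℝ, 0 ≤ l → l < lstar → Summable (fun x => p x * p x ^ (-l)))
    (l : ℝ) (hl0 : 0 ≤ l) (hll : l < lstar) :
    (∀ β : ℝ, 0 ≤ β → Summable (fun x => p x * p x ^ (-β)) →
        β * (H + dshift p H l) - Real.log (∑' x, p x * p x ^ (-β))
          ≤ l * (H + dshift p H l) - Real.log (∑' x, p x * p x ^ (-l))) ∧
    rateR p H (dshift p H l)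
      = l * (H + dshift p H l) - Real.log (∑' x, p x * p x ^ (-l)) :=
  stmt4_general p hp0 hp1 H lstar hsum l hl0 hll
end

section
/- The function $r_X(\delta)$ is convex and non-decreasing in $\delta$ on $[0,\infty)$, and strictly increasing on $[0, \Delta^*(X))$ where $\Delta^*(X) = \lim_{\lambda\uparrow\lambda^*(X)} \delta(\lambda)$. -/
open scoped BigOperators
open Classical in
/-- Extended-real-valued right rate function
`r_X(δ) = sup_{λ≥0} [λ(H(X)+δ) - ln Σ_x p(x)^{1-λ}]`, where a `λ` whose sum diverges
contributes `-∞` (so that the value is `+∞` when the supremum is unbounded). -/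
noncomputable def rateE {α : Type*} (p : α → ℝ) (H δ : ℝ) : EReal :=
  ⨆ l : {l : ℝ // 0 ≤ l},
    if Summable (fun x => p x * p x ^ (-(l : ℝ))) then
      (((l : ℝ) * (H + δ) - Real.log (∑' x, p x * p x ^ (-(l : ℝ))) : ℝ) : EReal)
    else ⊥

/-!
`r_X` is the supremum over `λ ≥ 0` of the affine functions `δ ↦ λ (H + δ) - log Z(λ)`, where
`Z(λ) = ∑ p(x)^{1-λ}`, so it is convex and non-decreasing. By Jensen's inequality `log Z` lies
above its tangent at `λ₁`, whose slope is `H + δ(λ₁)`; hence `r_X(d) ≤ λ₁ (H + δ(λ₁)) - log Z(λ₁)`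
whenever `d ≤ δ(λ₁)`, while `r_X(d') ≥ λ₁ (H + d') - log Z(λ₁)`. Given `d < d'` and `d < δ(λ)`,
continuity of `δ` on `[0, λ]` and `δ(0) = 0` yield `λ₁ > 0` with `d < δ(λ₁) < d'`, and the two
bounds give `r_X(d) < r_X(d')`.
-/

open Real

theorem tsum_mul_exp_div_tsum_le_tsum_mul_exp {ι : Type*} {w u : ι → ℝ} (hw : ∀ i, 0 ≤ w i)
    (hws : Summable w) (hwu : Summable fun i => w i * u i)
    (hwe : Summable fun i => w i * exp (u i)) (hW : 0 < ∑' i, w i) :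
    (∑' i, w i) * exp ((∑' i, w i * u i) / ∑' i, w i) ≤ ∑' i, w i * exp (u i) := by
  set W := ∑' i, w i
  set m := (∑' i, w i * u i) / W
  have htangent : ∀ i, exp m * (w i + w i * u i - w i * m) ≤ w i * exp (u i) := fun i => by
    have : exp m * (u i - m + 1) ≤ exp (u i) :=
      calc exp m * (u i - m + 1) ≤ exp m * exp (u i - m) := by gcongr; exact add_one_le_exp _
        _ = exp (u i) := by rw [← exp_add]; ring_nf
    calc exp m * (w i + w i * u i - w i * m) = w i * (exp m * (u i - m + 1)) := by ring
      _ ≤ w i * exp (u i) := mul_le_mul_of_nonneg_left this (hw i)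
  have hsum : HasSum (fun i => exp m * (w i + w i * u i - w i * m)) (W * exp m) := by
    have hmW : m * W = ∑' i, w i * u i := div_mul_cancel₀ _ hW.ne'
    have hval : exp m * (W + ∑' i, w i * u i - W * m) = W * exp m := by rw [← hmW]; ring
    exact hval ▸ ((hws.hasSum.add hwu.hasSum).sub (hws.hasSum.mul_right m)).mul_left (exp m)
  exact hsum.tsum_eq ▸ hsum.summable.tsum_le_tsum htangent hwe

noncomputable section

variable {α : Type*} {p : α → ℝ}

/-- The unnormalised tilted weight `p(x)^{1-λ}`, written `p x * p x ^ (-λ)` as in `rateE`. -/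
def tilt (p : α → ℝ) (l : ℝ) (x : α) : ℝ := p x * p x ^ (-l)

def tiltSum (p : α → ℝ) (l : ℝ) : ℝ := ∑' x, tilt p l x

def tiltLogSum (p : α → ℝ) (l : ℝ) : ℝ := ∑' x, tilt p l x * -log (p x)

def rateObjective (p : α → ℝ) (H δ l : ℝ) : ℝ := l * (H + δ) - log (tiltSum p l)

open Classical in
theorem rateE_eq (H δ : ℝ) : rateE p H δ = ⨆ l : {l : ℝ // 0 ≤ l},
    if Summable (tilt p l) then (rateObjective p H δ l : EReal) else ⊥ := rfl

theorem dshift_eq (H l : ℝ) : dshift p H l = tiltLogSum p l / tiltSum p l - H := rfl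

theorem rateObjective_le_rateE {H δ l : ℝ} (hl : 0 ≤ l) (hs : Summable (tilt p l)) :
    (rateObjective p H δ l : EReal) ≤ rateE p H δ := by
  rw [rateE_eq]
  exact le_iSup_of_le ⟨l, hl⟩ (by rw [if_pos hs])

theorem rateE_le {H δ : ℝ} {c : EReal}
    (h : ∀ l, 0 ≤ l → Summable (tilt p l) → (rateObjective p H δ l : EReal) ≤ c) :
    rateE p H δ ≤ c := by
  rw [rateE_eq]
  refine iSup_le fun l => ?_
  split_ifs with hs
  exacts [h l l.2 hs, bot_le]

theorem rateE_convex_comb (H a b s t : ℝ) (hs : 0 ≤ s) (ht : 0 ≤ t) (hst : s + t = 1) :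
    rateE p H (s * a + t * b) ≤ (s : EReal) * rateE p H a + (t : EReal) * rateE p H b := by
  refine rateE_le fun l hl hsum => ?_
  have hcomb : rateObjective p H (s * a + t * b) l =
      s * rateObjective p H a l + t * rateObjective p H b l := by
    simp only [rateObjective]
    rw [eq_sub_of_add_eq hst]
    ring
  rw [hcomb, EReal.coe_add, EReal.coe_mul, EReal.coe_mul]
  gcongr <;> exact rateObjective_le_rateE hl hsum

theorem monotone_rateE (H : ℝ) : Monotone (rateE p H) := fun d₁ d₂ hd => by
  refine rateE_le fun l hl hsum => le_trans ?_ (rateObjective_le_rateE hl hsum)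
  rw [EReal.coe_le_coe_iff]
  unfold rateObjective
  gcongr

theorem le_one_of_hasSum_one (hp0 : ∀ x, 0 ≤ p x) (hp : HasSum p 1) (x : α) : p x ≤ 1 :=
  le_hasSum hp x fun y _ => hp0 y

theorem tilt_nonneg (hp0 : ∀ x, 0 ≤ p x) (l : ℝ) (x : α) : 0 ≤ tilt p l x :=
  mul_nonneg (hp0 x) (rpow_nonneg (hp0 x) _)

theorem tilt_zero : tilt p 0 = p := funext fun x => by simp [tilt]

theorem tilt_mono (hp0 : ∀ x, 0 ≤ p x) (hle : ∀ x, p x ≤ 1) {μ l : ℝ} (h : μ ≤ l) (x : α) :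
    tilt p μ x ≤ tilt p l x := by
  rcases (hp0 x).eq_or_lt with hx | hx
  · simp [tilt, ← hx]
  · exact mul_le_mul_of_nonneg_left (rpow_le_rpow_of_exponent_ge hx (hle x) (neg_le_neg h))
      (hp0 x)

theorem tilt_mul_neg_log_mono (hp0 : ∀ x, 0 ≤ p x) (hle : ∀ x, p x ≤ 1) {μ l : ℝ} (h : μ ≤ l)
    (x : α) : tilt p μ x * -log (p x) ≤ tilt p l x * -log (p x) :=
  mul_le_mul_of_nonneg_right (tilt_mono hp0 hle h x) (neg_nonneg.2 (log_nonpos (hp0 x) (hle x)))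

theorem tilt_mul_neg_log_nonneg (hp0 : ∀ x, 0 ≤ p x) (hle : ∀ x, p x ≤ 1) (l : ℝ) (x : α) :
    0 ≤ tilt p l x * -log (p x) :=
  mul_nonneg (tilt_nonneg hp0 l x) (neg_nonneg.2 (log_nonpos (hp0 x) (hle x)))

theorem one_le_tiltSum (hp0 : ∀ x, 0 ≤ p x) (hp : HasSum p 1) {l : ℝ} (hl : 0 ≤ l)
    (hs : Summable (tilt p l)) : 1 ≤ tiltSum p l := by
  rw [← hp.tsum_eq]
  refine hp.summable.tsum_le_tsum (fun x => ?_) hs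
  simpa only [tilt_zero] using tilt_mono hp0 (le_one_of_hasSum_one hp0 hp) hl x

theorem tilt_mul_exp (hp0 : ∀ x, 0 ≤ p x) (l₁ l : ℝ) (x : α) :
    tilt p l₁ x * exp ((l - l₁) * -log (p x)) = tilt p l x := by
  rcases (hp0 x).eq_or_lt with hx | hx
  · simp [tilt, ← hx]
  · simp only [tilt, rpow_def_of_pos hx, mul_assoc, ← exp_add]
    ring_nf

/-- Tangent-line inequality for the convex function `log ∘ tiltSum p`, whose slope at `l₁` is
`tiltLogSum p l₁ / tiltSum p l₁`. -/
theorem log_tiltSum_add_le (hp0 : ∀ x, 0 ≤ p x) (hp : HasSum p 1) {l₁ l : ℝ} (hl₁ : 0 ≤ l₁)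
    (hs₁ : Summable (tilt p l₁)) (hsl₁ : Summable fun x => tilt p l₁ x * -log (p x))
    (hs : Summable (tilt p l)) :
    log (tiltSum p l₁) + (l - l₁) * (tiltLogSum p l₁ / tiltSum p l₁) ≤ log (tiltSum p l) := by
  have hZ₁ : 0 < tiltSum p l₁ := one_pos.trans_le (one_le_tiltSum hp0 hp hl₁ hs₁)
  have hwu : ∀ x, tilt p l₁ x * ((l - l₁) * -log (p x)) = (l - l₁) * (tilt p l₁ x * -log (p x)) :=
    fun x => by ring
  have hJ := tsum_mul_exp_div_tsum_le_tsum_mul_exp (u := fun x => (l - l₁) * -log (p x))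
    (tilt_nonneg hp0 l₁) hs₁ (by simpa only [hwu] using hsl₁.mul_left (l - l₁))
    (by simpa only [tilt_mul_exp hp0] using hs) hZ₁
  simp only [tilt_mul_exp hp0, hwu, tsum_mul_left] at hJ
  change tiltSum p l₁ * exp ((l - l₁) * tiltLogSum p l₁ / tiltSum p l₁) ≤ tiltSum p l at hJ
  have := log_le_log (by positivity) hJ
  rwa [log_mul hZ₁.ne' (exp_ne_zero _), log_exp, mul_div_assoc] at this

theorem rateE_le_of_le_dshift (hp0 : ∀ x, 0 ≤ p x) (hp : HasSum p 1) {H d l₁ : ℝ}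
    (hl₁ : 0 ≤ l₁) (hs₁ : Summable (tilt p l₁))
    (hsl₁ : Summable fun x => tilt p l₁ x * -log (p x)) (hd : d ≤ dshift p H l₁) :
    rateE p H d ≤ ((l₁ * (H + dshift p H l₁) - log (tiltSum p l₁) : ℝ) : EReal) := by
  refine rateE_le fun l hl hs => EReal.coe_le_coe_iff.2 ?_
  have htangent := log_tiltSum_add_le hp0 hp hl₁ hs₁ hsl₁ hs (l := l)
  have hslope := mul_le_mul_of_nonneg_left hd hl
  rw [dshift_eq] at hslope ⊢
  unfold rateObjective
  linarith

theorem dshift_zero {H : ℝ} (hp : HasSum p 1) (hH : HasSum (fun x => p x * -log (p x)) H) :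
    dshift p H 0 = 0 := by
  rw [dshift_eq, tiltLogSum, tiltSum, tilt_zero, hp.tsum_eq, hH.tsum_eq, div_one, sub_self]

theorem continuousOn_dshift (hp0 : ∀ x, 0 ≤ p x) (hp : HasSum p 1) {H l : ℝ}
    (hs : Summable (tilt p l)) (hsl : Summable fun x => tilt p l x * -log (p x)) :
    ContinuousOn (dshift p H) (Set.Icc 0 l) := by
  have hle := le_one_of_hasSum_one hp0 hp
  have hcont : ∀ x, Continuous fun μ => tilt p μ x := fun x => by
    rcases (hp0 x).eq_or_lt with hx | hx
    · simp only [tilt, ← hx, zero_mul]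
      exact continuous_const
    · exact continuous_const.mul (continuous_const.rpow continuous_neg fun _ => Or.inl hx.ne')
  have hZ : ContinuousOn (tiltSum p) (Set.Icc 0 l) :=
    continuousOn_tsum (fun x => (hcont x).continuousOn) hs fun x μ hμ => by
      rw [norm_of_nonneg (tilt_nonneg hp0 μ x)]
      exact tilt_mono hp0 hle hμ.2 x
  have hE : ContinuousOn (tiltLogSum p) (Set.Icc 0 l) :=
    continuousOn_tsum (fun x => ((hcont x).mul continuous_const).continuousOn) hsl
      fun x μ hμ => by
        rw [norm_of_nonneg (tilt_mul_neg_log_nonneg hp0 hle μ x)]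
        exact tilt_mul_neg_log_mono hp0 hle hμ.2 x
  refine (hE.div hZ fun μ hμ => ?_).sub continuousOn_const
  exact (one_pos.trans_le (one_le_tiltSum hp0 hp hμ.1
    (hs.of_nonneg_of_le (tilt_nonneg hp0 μ) (tilt_mono hp0 hle hμ.2)))).ne'

theorem exists_dshift_mem_Ioo (hp0 : ∀ x, 0 ≤ p x) (hp : HasSum p 1) {H d₁ d₂ l : ℝ}
    (hH : HasSum (fun x => p x * -log (p x)) H) (hl : 0 ≤ l) (hs : Summable (tilt p l))
    (hsl : Summable fun x => tilt p l x * -log (p x)) (hd₁ : 0 ≤ d₁)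
    (hd₁l : d₁ < dshift p H l) (hd : d₁ < d₂) :
    ∃ l₁ ∈ Set.Ioc 0 l, dshift p H l₁ ∈ Set.Ioo d₁ d₂ := by
  set v := min ((d₁ + d₂) / 2) (dshift p H l)
  have hv : v ∈ Set.Ioo d₁ d₂ :=
    ⟨lt_min (by linarith) hd₁l, (min_le_left _ _).trans_lt (by linarith)⟩
  have h0 := dshift_zero hp hH
  obtain ⟨l₁, hl₁, hl₁v⟩ := intermediate_value_Icc hl (continuousOn_dshift hp0 hp hs hsl)
    ⟨h0.trans_le (hd₁.trans hv.1.le), min_le_right _ _⟩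
  refine ⟨l₁, ⟨hl₁.1.lt_of_ne ?_, hl₁.2⟩, hl₁v ▸ hv⟩
  rintro rfl
  linarith [hv.1]

theorem rateE_lt_rateE (hp0 : ∀ x, 0 ≤ p x) (hp : HasSum p 1) {H d₁ d₂ l : ℝ}
    (hH : HasSum (fun x => p x * -log (p x)) H) (hl : 0 ≤ l) (hs : Summable (tilt p l))
    (hd₁ : 0 ≤ d₁) (hd₁l : d₁ < dshift p H l) (hd : d₁ < d₂) :
    rateE p H d₁ < rateE p H d₂ := by
  have hle := le_one_of_hasSum_one hp0 hp
  -- otherwise `tiltLogSum p l` would be the junk value `0`, forcing `dshift p H l = -H ≤ 0`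
  have hsl : Summable fun x => tilt p l x * -log (p x) := by
    by_contra hns
    have hH0 : 0 ≤ H :=
      hH.nonneg fun x => mul_nonneg (hp0 x) (neg_nonneg.2 (log_nonpos (hp0 x) (hle x)))
    rw [dshift_eq, tiltLogSum, tsum_eq_zero_of_not_summable hns, zero_div] at hd₁l
    linarith
  obtain ⟨l₁, ⟨hl₁, hl₁l⟩, hd₁l₁, hl₁d₂⟩ := exists_dshift_mem_Ioo hp0 hp hH hl hs hsl hd₁ hd₁l hd
  have hs₁ : Summable (tilt p l₁) :=
    hs.of_nonneg_of_le (tilt_nonneg hp0 l₁) (tilt_mono hp0 hle hl₁l)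
  have hsl₁ : Summable fun x => tilt p l₁ x * -log (p x) :=
    hsl.of_nonneg_of_le (tilt_mul_neg_log_nonneg hp0 hle l₁) (tilt_mul_neg_log_mono hp0 hle hl₁l)
  calc rateE p H d₁ ≤ ((l₁ * (H + dshift p H l₁) - log (tiltSum p l₁) : ℝ) : EReal) :=
        rateE_le_of_le_dshift hp0 hp hl₁.le hs₁ hsl₁ hd₁l₁.le
    _ < rateObjective p H d₂ l₁ := by
        rw [EReal.coe_lt_coe_iff, rateObjective]
        gcongr
    _ ≤ rateE p H d₂ := rateObjective_le_rateE hl₁.le hs₁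

end

theorem stmt5_general {α : Type} (p : α → ℝ)
    (hp0 : ∀ x, 0 ≤ p x) (hp1 : HasSum p 1)
    (H : ℝ)
    (hH : HasSum (fun x => p x * (-Real.log (p x))) H) :
    (∀ a ∈ Set.Ici (0 : ℝ), ∀ b ∈ Set.Ici (0 : ℝ), ∀ s t : ℝ,
        0 ≤ s → 0 ≤ t → s + t = 1 →
        rateE p H (s * a + t * b) ≤ (s : EReal) * rateE p H a + (t : EReal) * rateE p H b) ∧
    MonotoneOn (rateE p H) (Set.Ici 0) ∧
    StrictMonoOn (rateE p H)
      {d : ℝ | 0 ≤ d ∧ ∃ l : ℝ, 0 ≤ l ∧ Summable (fun x => p x * p x ^ (-l)) ∧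
          d < dshift p H l} := by
  refine ⟨fun a _ b _ s t => rateE_convex_comb H a b s t, (monotone_rateE H).monotoneOn _, ?_⟩
  rintro d₁ ⟨hd₁, l, hl, hs, hd₁l⟩ d₂ - hd
  exact rateE_lt_rateE hp0 hp1 hH hl hs hd₁ hd₁l hd

/-- The rate function `r_X` is convex and non-decreasing on `[0,∞)`, and strictly
increasing on `[0, Δ*(X))`, where `Δ*(X) = lim_{λ↑λ*(X)} δ(λ)` (a real number `d ≥ 0`
lies below `Δ*(X)` iff `d < δ(λ)` for some admissible `λ`). -/
theorem stmt5 {α : Type} [Countable α] (p : α → ℝ)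
    (hp0 : ∀ x, 0 ≤ p x) (hp1 : HasSum p 1)
    (H S2 : ℝ)
    (hH : HasSum (fun x => p x * (-Real.log (p x))) H)
    (hS2 : HasSum (fun x => p x * (Real.log (p x)) ^ 2) S2)
    (hvar : 0 < S2 - H ^ 2)
    (hlstar : ∃ l : ℝ, 0 < l ∧ Summable (fun x => p x * p x ^ (-l))) :
    (∀ a ∈ Set.Ici (0 : ℝ), ∀ b ∈ Set.Ici (0 : ℝ), ∀ s t : ℝ,
        0 ≤ s → 0 ≤ t → s + t = 1 →
        rateE p H (s * a + t * b) ≤ (s : EReal) * rateE p H a + (t : EReal) * rateE p H b) ∧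
    MonotoneOn (rateE p H) (Set.Ici 0) ∧
    StrictMonoOn (rateE p H)
      {d : ℝ | 0 ≤ d ∧ ∃ l : ℝ, 0 ≤ l ∧ Summable (fun x => p x * p x ^ (-l)) ∧
          d < dshift p H l} :=
  stmt5_general p hp0 hp1 H hH
end

section
/- Left NEP (Chernoff part): For any $\delta \geq 0$ and positive integer $n$, $\Pr\{-\frac{1}{n}\ln p(X^n) \leq H(X) - \delta\} \leq e^{-n r_{X,-}(\delta)}$, where $r_{X,-}(\delta) = \sup_{\lambda\geq 0}[\lambda(\delta - H(X)) - \ln\sum_x p(x)^{1+\lambda}]$. -/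
open scoped BigOperators

/-- The left rate function `r_{X,-}(δ) = sup_{λ≥0} [λ(δ - H(X)) - ln Σ_x p(x)^{1+λ}]`. -/
noncomputable def rateL {α : Type*} (p : α → ℝ) (H δ : ℝ) : ℝ :=
  sSup {y : ℝ | ∃ l : ℝ, 0 ≤ l ∧ Summable (fun x => p x * p x ^ l) ∧
      y = l * (δ - H) - Real.log (∑' x, p x * p x ^ l)}

lemma tsum_pi_prod_ennreal {α : Type} (f : α → ENNReal) (n : ℕ) :
    ∑' xs : Fin n → α, ∏ i, f (xs i) = (∑' x, f x) ^ n := by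
  induction n with
  | zero =>
    haveI : Unique (Fin 0 → α) := ⟨⟨fun i => i.elim0⟩, fun b => funext fun i => i.elim0⟩
    rw [tsum_eq_single (default : Fin 0 → α)
      (fun b hb => absurd (Subsingleton.elim b default) hb)]
    simp
  | succ n ih =>
    rw [← (Fin.consEquiv (fun _ : Fin (n + 1) => α)).tsum_eq, ENNReal.tsum_prod']
    simp only [Fin.consEquiv_apply, Fin.prod_univ_succ, Fin.cons_zero, Fin.cons_succ]
    have h1 : ∀ a : α, (∑' xs : Fin n → α, f a * ∏ i : Fin n, f (xs i))
        = f a * ∑' xs : Fin n → α, ∏ i : Fin n, f (xs i) := fun a => ENNReal.tsum_mul_left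
    rw [tsum_congr h1, ENNReal.tsum_mul_right, ih, pow_succ, mul_comm]

lemma core_bound {α : Type} [Countable α] (p : α → ℝ)
    (hp0 : ∀ x, 0 ≤ p x) (hp1 : HasSum p 1)
    (H : ℝ) (δ : ℝ) (n : ℕ) (hn : 0 < n)
    (l : ℝ) (hl : 0 ≤ l) (hs : Summable (fun x => p x * p x ^ l)) :
    (∑' xs : Fin n → α,
        Set.indicator {xs : Fin n → α |
            -(1 / (n : ℝ)) * Real.log (∏ i, p (xs i)) ≤ H - δ}
          (fun xs => ∏ i, p (xs i)) xs)
      ≤ Real.exp (-(n : ℝ) * (l * (δ - H) - Real.log (∑' x, p x * p x ^ l))) := by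
  set f : α → ℝ := fun x => p x * p x ^ l with hf
  have hf0 : ∀ x, 0 ≤ f x := fun x =>
    mul_nonneg (hp0 x) (Real.rpow_nonneg (hp0 x) l)
  set Z : ℝ := ∑' x, f x with hZdef
  -- Z > 0
  have hex : ∃ x, 0 < p x := by
    by_contra h
    push_neg at h
    have : ∀ x, p x = 0 := fun x => le_antisymm (h x) (hp0 x)
    have hp' : p = fun _ => (0 : ℝ) := funext this
    have h0 : HasSum p 0 := by rw [hp']; exact hasSum_zero
    have := hp1.unique h0
    norm_num at this
  obtain ⟨x0, hx0⟩ := hex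
  have hZpos : 0 < Z := by
    have h1 : f x0 ≤ Z := Summable.le_tsum hs x0 fun b _ => hf0 b
    have h2 : 0 < f x0 := mul_pos hx0 (Real.rpow_pos_of_pos hx0 l)
    linarith
  set C : ℝ := Real.exp ((n : ℝ) * l * (H - δ)) with hC
  set g : (Fin n → α) → ℝ := fun xs => Set.indicator {xs : Fin n → α |
      -(1 / (n : ℝ)) * Real.log (∏ i, p (xs i)) ≤ H - δ}
      (fun xs => ∏ i, p (xs i)) xs with hg
  have hg0 : ∀ xs, 0 ≤ g xs := fun xs =>
    Set.indicator_nonneg (fun y _ => Finset.prod_nonneg fun i _ => hp0 (y i)) xs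
  -- termwise bound: g xs ≤ C * ∏ i, f (xs i)
  have hterm : ∀ xs : Fin n → α, g xs ≤ C * ∏ i, f (xs i) := by
    intro xs
    have hP0 : 0 ≤ ∏ i, p (xs i) := Finset.prod_nonneg fun i _ => hp0 (xs i)
    have hrhs0 : 0 ≤ C * ∏ i, f (xs i) :=
      mul_nonneg (Real.exp_nonneg _) (Finset.prod_nonneg fun i _ => hf0 (xs i))
    by_cases hmem : xs ∈ {xs : Fin n → α |
        -(1 / (n : ℝ)) * Real.log (∏ i, p (xs i)) ≤ H - δ}
    · simp only [hg]
      rw [Set.indicator_of_mem hmem]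
      set P : ℝ := ∏ i, p (xs i) with hPdef
      rcases eq_or_lt_of_le hP0 with hP | hP
      · rw [← hP]; exact hrhs0
      · -- P > 0 case
        have hprod : ∏ i, f (xs i) = P * P ^ l := by
          rw [hf]
          rw [Finset.prod_mul_distrib, hPdef, ← Real.finset_prod_rpow _ _
            (fun i _ => hp0 (xs i))]
        rw [hprod]
        have hn0 : (0 : ℝ) < n := by exact_mod_cast hn
        have hlog : (n : ℝ) * (δ - H) ≤ Real.log P := by
          have hm := hmem
          simp only [Set.mem_setOf_eq] at hm
          have h2 : -Real.log P ≤ (n : ℝ) * (H - δ) := by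
            have h3 := mul_le_mul_of_nonneg_left hm (le_of_lt hn0)
            calc -Real.log P = (n : ℝ) * (-(1 / (n : ℝ)) * Real.log P) := by
                  field_simp
              _ ≤ (n : ℝ) * (H - δ) := h3
          nlinarith
        have hPl : Real.exp ((n : ℝ) * l * (δ - H)) ≤ P ^ l := by
          rw [← Real.exp_log hP, ← Real.exp_mul, mul_comm (Real.log P) l]
          apply Real.exp_le_exp.2
          calc (n : ℝ) * l * (δ - H) = l * ((n : ℝ) * (δ - H)) := by ring
            _ ≤ l * Real.log P := mul_le_mul_of_nonneg_left hlog hl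
        have h1 : (1 : ℝ) ≤ C * P ^ l := by
          calc (1 : ℝ) = Real.exp ((n : ℝ) * l * (H - δ)) *
                Real.exp ((n : ℝ) * l * (δ - H)) := by
                rw [← Real.exp_add]; ring_nf; rw [Real.exp_zero]
            _ ≤ C * P ^ l :=
                mul_le_mul_of_nonneg_left hPl (Real.exp_nonneg _)
        calc P = 1 * P := (one_mul P).symm
          _ ≤ (C * P ^ l) * P := mul_le_mul_of_nonneg_right h1 hP0
          _ = C * (P * P ^ l) := by ring
    · simp only [hg]
      rw [Set.indicator_of_notMem hmem]; exact hrhs0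
  -- the bound value
  have hCZ : C * Z ^ n = Real.exp (-(n : ℝ) * (l * (δ - H) - Real.log Z)) := by
    have hZn : Z ^ n = Real.exp ((n : ℝ) * Real.log Z) := by
      rw [Real.exp_nat_mul, Real.exp_log hZpos]
    rw [hC, hZn, ← Real.exp_add]
    congr 1
    ring
  rw [← hCZ]
  by_cases hsg : Summable g
  · -- ENNReal computation
    have key : ENNReal.ofReal (∑' xs, g xs) ≤ ENNReal.ofReal (C * Z ^ n) := by
      rw [ENNReal.ofReal_tsum_of_nonneg hg0 hsg]
      have step1 : ∀ xs : Fin n → α, ENNReal.ofReal (g xs) ≤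
          ENNReal.ofReal C * ∏ i, ENNReal.ofReal (f (xs i)) := by
        intro xs
        calc ENNReal.ofReal (g xs) ≤ ENNReal.ofReal (C * ∏ i, f (xs i)) :=
              ENNReal.ofReal_le_ofReal (hterm xs)
          _ = ENNReal.ofReal C * ∏ i, ENNReal.ofReal (f (xs i)) := by
              rw [ENNReal.ofReal_mul (Real.exp_nonneg _),
                ENNReal.ofReal_prod_of_nonneg (fun i _ => hf0 (xs i))]
      calc (∑' xs, ENNReal.ofReal (g xs)) ≤
            ∑' xs : Fin n → α, ENNReal.ofReal C * ∏ i, ENNReal.ofReal (f (xs i)) :=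
            ENNReal.tsum_le_tsum step1
        _ = ENNReal.ofReal C * (∑' x, ENNReal.ofReal (f x)) ^ n := by
            rw [ENNReal.tsum_mul_left, tsum_pi_prod_ennreal (fun x => ENNReal.ofReal (f x))]
        _ = ENNReal.ofReal (C * Z ^ n) := by
            rw [← ENNReal.ofReal_tsum_of_nonneg hf0 hs, ← hZdef,
              ENNReal.ofReal_mul (Real.exp_nonneg _), ← ENNReal.ofReal_pow hZpos.le]
    have h1 : 0 ≤ ∑' xs, g xs := tsum_nonneg hg0
    exact (ENNReal.ofReal_le_ofReal_iff
      (mul_nonneg (Real.exp_nonneg _) (pow_nonneg hZpos.le n))).1 key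
  · rw [tsum_eq_zero_of_not_summable hsg]
    exact mul_nonneg (Real.exp_nonneg _) (pow_nonneg hZpos.le n)

/-- Left NEP (Chernoff part): `Pr{-(1/n) ln p(X^n) ≤ H - δ} ≤ exp(-n r_{X,-}(δ))`. -/
theorem stmt10 {α : Type} [Countable α] (p : α → ℝ)
    (hp0 : ∀ x, 0 ≤ p x) (hp1 : HasSum p 1)
    (H : ℝ) (hH : HasSum (fun x => p x * (-Real.log (p x))) H)
    (δ : ℝ) (hδ : 0 ≤ δ) (n : ℕ) (hn : 0 < n) :
    (∑' xs : Fin n → α,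
        Set.indicator {xs : Fin n → α |
            -(1 / (n : ℝ)) * Real.log (∏ i, p (xs i)) ≤ H - δ}
          (fun xs => ∏ i, p (xs i)) xs)
      ≤ Real.exp (-(n : ℝ) * rateL p H δ) := by
  set S := {y : ℝ | ∃ l : ℝ, 0 ≤ l ∧ Summable (fun x => p x * p x ^ l) ∧
      y = l * (δ - H) - Real.log (∑' x, p x * p x ^ l)} with hS
  set L := ∑' xs : Fin n → α,
      Set.indicator {xs : Fin n → α |
          -(1 / (n : ℝ)) * Real.log (∏ i, p (xs i)) ≤ H - δ}
        (fun xs => ∏ i, p (xs i)) xs with hL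
  have hcore : ∀ y ∈ S, L ≤ Real.exp (-(n : ℝ) * y) := by
    rintro y ⟨l, hl, hsum, rfl⟩
    exact core_bound p hp0 hp1 H δ n hn l hl hsum
  have h0S : (0 : ℝ) ∈ S := by
    refine ⟨0, le_refl 0, ?_, ?_⟩
    · simpa using hp1.summable
    · simp [hp1.tsum_eq]
  have hrate : rateL p H δ = sSup S := rfl
  by_cases hbdd : BddAbove S
  · rcases le_or_gt L 0 with hL0 | hL0
    · exact le_trans hL0 (Real.exp_nonneg _)
    · have hbound : ∀ y ∈ S, y ≤ -Real.log L / n := by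
        intro y hy
        have h1 : L ≤ Real.exp (-(n : ℝ) * y) := hcore y hy
        have h2 : Real.log L ≤ -(n : ℝ) * y := by
          calc Real.log L ≤ Real.log (Real.exp (-(n : ℝ) * y)) :=
                Real.log_le_log hL0 h1
            _ = -(n : ℝ) * y := Real.log_exp _
        have hnpos : (0 : ℝ) < n := by exact_mod_cast hn
        rw [le_div_iff₀ hnpos]
        nlinarith
      have hsup : sSup S ≤ -Real.log L / n := csSup_le ⟨0, h0S⟩ hbound
      have hnpos : (0 : ℝ) < n := by exact_mod_cast hn
      calc L = Real.exp (Real.log L) := (Real.exp_log hL0).symm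
        _ ≤ Real.exp (-(n : ℝ) * rateL p H δ) := by
            apply Real.exp_le_exp.2
            rw [hrate]
            nlinarith [(le_div_iff₀ hnpos).1 hsup]
  · rw [hrate, Real.sSup_of_not_bddAbove hbdd]
    simpa using hcore 0 h0S
end

section
/- Right conditional NEP (Chernoff part): For an IID pair $(X,Y)$ with conditional pmf $p(x|y)$, for any $\delta \geq 0$ and positive integer $n$, $\Pr\{-\frac{1}{n}\ln p(X^n|Y^n) > H(X|Y)+\delta\} \leq e^{-n r_{X|Y}(\delta)}$ where $r_{X|Y}(\delta) = \sup_{\lambda\geq 0}[\lambda(H(X|Y)+\delta) - \ln\sum_y p(y)\sum_x p(x|y)^{1-\lambda}]$. -/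
/-! The Chernoff bound. For `l ≥ 0`, on the event `-(1/n) ln p(xⁿ|yⁿ) > a` the weight
`exp (-n l a) · p(xⁿ|yⁿ)^(-l)` is at least `1`, so the probability of the event is at most
`exp (-n l a) · E[p(xⁿ|yⁿ)^(-l)] = exp (-n l a) · Z(l)ⁿ`, where
`Z(l) = Σ_y p(y) Σ_x p(x|y)^(1-l)` factorizes over the `n` IID coordinates. Taking the
infimum of these bounds over `l` gives `exp (-n r_{X|Y}(δ))`. -/

open scoped BigOperators

/-- The conditional right rate function
`r_{X|Y}(δ) = sup_{λ≥0} [λ(H(X|Y)+δ) - ln Σ_y p(y) Σ_x p(x|y)^{1-λ}]`. -/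
noncomputable def rateRC {α β : Type*} (pY : β → ℝ) (pXY : α → β → ℝ) (Hc δ : ℝ) : ℝ :=
  sSup {v : ℝ | ∃ l : ℝ, 0 ≤ l ∧
      Summable (fun xy : α × β => pY xy.2 * (pXY xy.1 xy.2 * pXY xy.1 xy.2 ^ (-l))) ∧
      v = l * (Hc + δ)
          - Real.log (∑' xy : α × β, pY xy.2 * (pXY xy.1 xy.2 * pXY xy.1 xy.2 ^ (-l)))}

open Real

theorem HasSum.fin_prod_pow {γ : Type*} {f : γ → ℝ} {Z : ℝ} (hf : HasSum f Z) (hf₀ : 0 ≤ f)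
    (n : ℕ) : HasSum (fun s : Fin n → γ => ∏ i, f (s i)) (Z ^ n) := by
  induction n with
  | zero => simp
  | succ n ih =>
    have hprod₀ : 0 ≤ fun s : Fin n → γ => ∏ i, f (s i) :=
      fun s => Finset.prod_nonneg fun i _ => hf₀ (s i)
    have hsummable := hf.summable.mul_of_nonneg ih.summable hf₀ hprod₀
    have hprod := hf.mul ih hsummable
    rw [pow_succ', ← (Fin.consEquiv fun _ => γ).hasSum_iff]
    simpa [Fin.consEquiv, Fin.prod_univ_succ, Function.comp_def] using hprod

theorem pow_le_exp_mul_log {Z : ℝ} (hZ : 0 ≤ Z) (n : ℕ) : Z ^ n ≤ exp (n * log Z) := by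
  rcases hZ.eq_or_lt with rfl | hZ
  · simpa using pow_le_one₀ le_rfl zero_le_one
  · rw [exp_nat_mul, exp_log hZ]

theorem one_le_exp_mul_mul_rpow_neg {P t l : ℝ} (hP : 0 < P) (hl : 0 ≤ l) (h : log P ≤ t) :
    1 ≤ exp (l * t) * P ^ (-l) := by
  rw [rpow_def_of_pos hP, ← exp_add]
  exact one_le_exp (by nlinarith)

theorem log_le_neg_mul_of_neg_one_div_mul_log_gt {ι : Type*} {p : ι → ℝ} {n : ℕ}
    {s : Fin n → ι} {a : ℝ}
    (h : -(1 / (n : ℝ)) * log (∏ i : Fin n, p (s i)) > a) :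
    log (∏ i : Fin n, p (s i)) ≤ -(n * a) := by
  rcases n.eq_zero_or_pos with rfl | hn
  · simp
  · have hn : (0 : ℝ) < n := Nat.cast_pos.mpr hn
    rw [gt_iff_lt, neg_mul, one_div_mul_eq_div, lt_neg, div_lt_iff₀ hn] at h
    linarith

theorem tsum_indicator_neg_log_prod_gt_le {γ : Type*} {w p : γ → ℝ} (hw : ∀ x, 0 ≤ w x)
    (hp : ∀ x, 0 ≤ p x) (a : ℝ) {l : ℝ} (hl : 0 ≤ l)
    (hs : Summable fun x => w x * (p x * p x ^ (-l))) (n : ℕ) :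
    ∑' s : Fin n → γ, {s : Fin n → γ | -(1 / (n : ℝ)) * log (∏ i, p (s i)) > a}.indicator
        (fun s => ∏ i, w (s i) * p (s i)) s
      ≤ exp (-(n : ℝ) * (l * a - log (∑' x, w x * (p x * p x ^ (-l))))) := by
  set f : γ → ℝ := fun x => w x * (p x * p x ^ (-l))
  set E := {s : Fin n → γ | -(1 / (n : ℝ)) * log (∏ i, p (s i)) > a}
  set G : (Fin n → γ) → ℝ := fun s => ∏ i, w (s i) * p (s i)
  set C := exp (l * -(n * a))
  have hf₀ : 0 ≤ f := fun x => mul_nonneg (hw x) (mul_nonneg (hp x) (rpow_nonneg (hp x) _))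
  have hG₀ : 0 ≤ G := fun s => Finset.prod_nonneg fun i _ => mul_nonneg (hw _) (hp _)
  have hZ := hs.hasSum.fin_prod_pow hf₀ n
  have hpointwise : ∀ s, E.indicator G s ≤ C * ∏ i, f (s i) := by
    intro s
    have hbound : 0 ≤ C * ∏ i, f (s i) :=
      mul_nonneg (exp_pos _).le (Finset.prod_nonneg fun i _ => hf₀ _)
    by_cases hsE : s ∈ E
    swap
    · rwa [Set.indicator_of_notMem hsE]
    rw [Set.indicator_of_mem hsE]
    -- Since `log 0 = 0`, `E` may contain strings with `∏ p = 0`; those have weight `G s = 0`.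
    rcases (hG₀ s).eq_or_lt with hGs | hGs
    · rwa [← hGs]
    have hP : 0 < ∏ i, p (s i) := by
      refine (Finset.prod_nonneg fun i _ => hp (s i)).lt_of_ne' (Finset.prod_ne_zero_iff.mpr ?_)
      exact fun i hi => right_ne_zero_of_mul (Finset.prod_ne_zero_iff.mp hGs.ne' i hi)
    have hfactor : ∏ i, f (s i) = G s * (∏ i, p (s i)) ^ (-l) := by
      rw [← finsetProd_rpow _ _ (fun i _ => hp _), ← Finset.prod_mul_distrib]
      exact Finset.prod_congr rfl fun i _ => by ring
    calc G s ≤ G s * (C * (∏ i, p (s i)) ^ (-l)) :=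
          le_mul_of_one_le_right hGs.le
            (one_le_exp_mul_mul_rpow_neg hP hl (log_le_neg_mul_of_neg_one_div_mul_log_gt hsE))
      _ = C * ∏ i, f (s i) := by rw [hfactor]; ring
  have hind : Summable (E.indicator G) :=
    (hZ.summable.mul_left C).of_nonneg_of_le (Set.indicator_nonneg fun s _ => hG₀ s) hpointwise
  calc ∑' s, E.indicator G s ≤ C * (∑' x, f x) ^ n :=
        hasSum_le hpointwise hind.hasSum (hZ.mul_left C)
    _ ≤ C * exp (n * log (∑' x, f x)) :=
        mul_le_mul_of_nonneg_left (pow_le_exp_mul_log (tsum_nonneg hf₀) n) (exp_pos _).le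
    _ = exp (-(n : ℝ) * (l * a - log (∑' x, f x))) := by rw [← exp_add]; ring_nf

theorem le_exp_neg_mul_sSup {S : Set ℝ} (hS : S.Nonempty) {c L : ℝ} (hc : 0 ≤ c)
    (h : ∀ v ∈ S, L ≤ exp (-c * v)) : L ≤ exp (-c * sSup S) := by
  rcases le_or_gt L 0 with hL | hL
  · exact hL.trans (exp_pos _).le
  have hbound : c * sSup S ≤ -log L := by
    rw [← smul_eq_mul, ← Real.sSup_smul_of_nonneg hc]
    refine csSup_le hS.smul_set ?_
    rintro _ ⟨v, hv, rfl⟩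
    have := (log_le_iff_le_exp hL).mpr (h v hv)
    simp only [smul_eq_mul]
    linarith
  calc L = exp (log L) := (exp_log hL).symm
    _ ≤ exp (-c * sSup S) := exp_le_exp.mpr (by linarith)

theorem summable_mul_of_hasSum_one {α β : Type*} {pY : β → ℝ} {pXY : α → β → ℝ}
    (hY0 : ∀ y, 0 ≤ pY y) (hY1 : Summable pY) (hXY0 : ∀ x y, 0 ≤ pXY x y)
    (hXY1 : ∀ y, HasSum (fun x => pXY x y) 1) :
    Summable fun xy : α × β => pY xy.2 * pXY xy.1 xy.2 := by
  have hswap₀ : ∀ yx : β × α, 0 ≤ pY yx.1 * pXY yx.2 yx.1 :=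
    fun yx => mul_nonneg (hY0 _) (hXY0 _ _)
  have h1 : ∀ y, Summable fun x => pY y * pXY x y := fun y => (hXY1 y).summable.mul_left _
  have h2 : Summable fun y => ∑' x, pY y * pXY x y := by
    simpa [tsum_mul_left, (hXY1 _).tsum_eq] using hY1
  have hswap : Summable fun yx : β × α => pY yx.1 * pXY yx.2 yx.1 :=
    (summable_prod_of_nonneg hswap₀).2 ⟨h1, h2⟩
  exact hswap.prod_symm

theorem stmt12_general {α β : Type}
    (pY : β → ℝ) (pXY : α → β → ℝ)
    (hY0 : ∀ y, 0 ≤ pY y) (hY1 : HasSum pY 1)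
    (hXY0 : ∀ x y, 0 ≤ pXY x y) (hXY1 : ∀ y, HasSum (fun x => pXY x y) 1)
    (Hc : ℝ)
    (δ : ℝ) (n : ℕ) :
    (∑' s : Fin n → α × β,
        Set.indicator {s : Fin n → α × β |
            -(1 / (n : ℝ)) * Real.log (∏ i, pXY (s i).1 (s i).2) > Hc + δ}
          (fun s => ∏ i, pY (s i).2 * pXY (s i).1 (s i).2) s)
      ≤ Real.exp (-(n : ℝ) * rateRC pY pXY Hc δ) := by
  have hjoint := summable_mul_of_hasSum_one hY0 hY1.summable hXY0 hXY1
  rw [rateRC]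
  refine le_exp_neg_mul_sSup ?_ n.cast_nonneg ?_
  · exact ⟨_, 0, le_rfl, by simpa using hjoint, rfl⟩
  rintro _ ⟨l, hl, hs, rfl⟩
  exact tsum_indicator_neg_log_prod_gt_le (w := fun xy : α × β => pY xy.2)
    (p := fun xy : α × β => pXY xy.1 xy.2) (fun _ => hY0 _) (fun _ => hXY0 _ _) (Hc + δ) hl hs n

/-- Right conditional NEP (Chernoff part): for an IID pair `(X,Y)` with conditional
pmf `p(x|y)`, `Pr{-(1/n) ln p(X^n|Y^n) > H(X|Y) + δ} ≤ exp(-n r_{X|Y}(δ))`. -/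
theorem stmt12 {α β : Type} [Countable α] [Countable β]
    (pY : β → ℝ) (pXY : α → β → ℝ)
    (hY0 : ∀ y, 0 ≤ pY y) (hY1 : HasSum pY 1)
    (hXY0 : ∀ x y, 0 ≤ pXY x y) (hXY1 : ∀ y, HasSum (fun x => pXY x y) 1)
    (Hc : ℝ)
    (hHc : HasSum (fun xy : α × β =>
        pY xy.2 * pXY xy.1 xy.2 * (-Real.log (pXY xy.1 xy.2))) Hc)
    (δ : ℝ) (hδ : 0 ≤ δ) (n : ℕ) (hn : 0 < n) :
    (∑' s : Fin n → α × β,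
        Set.indicator {s : Fin n → α × β |
            -(1 / (n : ℝ)) * Real.log (∏ i, pXY (s i).1 (s i).2) > Hc + δ}
          (fun s => ∏ i, pY (s i).2 * pXY (s i).1 (s i).2) s)
      ≤ Real.exp (-(n : ℝ) * rateRC pY pXY Hc δ) :=
  stmt12_general pY pXY hY0 hY1 hXY0 hXY1 Hc δ n
end

section
/- For a binary symmetric channel with crossover probability $p \in (0,1/2)$ and uniform input, the right rate function for conditional entropy is $r_{X|Y}(\delta) = D\left(p + \frac{\delta}{\ln\frac{1-p}{p}} \,\middle\|\, p\right)$ for $\delta \in [0, (1-p)\ln\frac{1-p}{p})$, where $D(q\|p) = (1-q)\ln\frac{1-q}{1-p} + q\ln\frac{q}{p}$ is binary relative entropy. -/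
open scoped BigOperators

/-- Binary relative entropy `D(q‖p) = (1-q) ln((1-q)/(1-p)) + q ln(q/p)`. -/
noncomputable def binD (q p : ℝ) : ℝ :=
  (1 - q) * Real.log ((1 - q) / (1 - p)) + q * Real.log (q / p)

/-- For a BSC with crossover probability `p ∈ (0,1/2)` and uniform input, the right
rate function for the conditional entropy `H(X|Y) = -p ln p - (1-p) ln(1-p)` is
`r_{X|Y}(δ) = D(p + δ/ln((1-p)/p) ‖ p)` for `δ ∈ [0, (1-p) ln((1-p)/p))`. -/
theorem stmt14 (p : ℝ) (hp0 : 0 < p) (hp : p < 1 / 2) :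
    ∀ δ : ℝ, 0 ≤ δ → δ < (1 - p) * Real.log ((1 - p) / p) →
      sSup {y : ℝ | ∃ l : ℝ, 0 ≤ l ∧
          y = l * ((-(p * Real.log p) - (1 - p) * Real.log (1 - p)) + δ)
              - Real.log (p ^ ((1 : ℝ) - l) + (1 - p) ^ ((1 : ℝ) - l))}
        = binD (p + δ / Real.log ((1 - p) / p)) p := by
  intro δ hδ0 hδ1
  have hp1 : p < 1 := by linarith
  have h1p : 0 < 1 - p := by linarith
  have hpp : p < 1 - p := by linarith
  set L : ℝ := Real.log (1 - p) - Real.log p with hLdef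
  have hLeq : Real.log ((1 - p) / p) = L := Real.log_div (ne_of_gt h1p) (ne_of_gt hp0)
  have hL : 0 < L := sub_pos.mpr (Real.log_lt_log hp0 hpp)
  clear_value L
  set q : ℝ := p + δ / Real.log ((1 - p) / p) with hqdef
  have hq : q = p + δ / L := by rw [hqdef, hLeq]
  clear_value q
  have hpq : p ≤ q := by
    rw [hq]; nlinarith [div_nonneg hδ0 hL.le]
  have hq0 : 0 < q := lt_of_lt_of_le hp0 hpq
  have hq1 : q < 1 := by
    rw [hq]
    have : δ / L < 1 - p := by
      rw [div_lt_iff₀ hL]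
      calc δ < (1 - p) * Real.log ((1 - p) / p) := hδ1
        _ = (1 - p) * L := by rw [hLeq]
    linarith
  have h1q : 0 < 1 - q := by linarith
  have hδL : δ = (q - p) * L := by
    rw [hq]; field_simp; ring
  have hKey : (-(p * Real.log p) - (1 - p) * Real.log (1 - p)) + δ
      = -(q * Real.log p + (1 - q) * Real.log (1 - p)) := by
    rw [hδL, hLdef]; ring
  have hbinD : binD q p
      = q * Real.log q + (1 - q) * Real.log (1 - q)
        - (q * Real.log p + (1 - q) * Real.log (1 - p)) := by
    unfold binD
    rw [Real.log_div (ne_of_gt h1q) (ne_of_gt h1p),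
        Real.log_div (ne_of_gt hq0) (ne_of_gt hp0)]
    ring
  apply IsGreatest.csSup_eq
  constructor
  · -- membership: the witness l* = 1 - (log(1-q) - log q)/L attains the value
    set t : ℝ := (Real.log (1 - q) - Real.log q) / L with htdef
    have htL : t * L = Real.log (1 - q) - Real.log q := by
      rw [htdef]; field_simp
    clear_value t
    refine ⟨1 - t, ?_, ?_⟩
    · have h1 : Real.log p ≤ Real.log q := Real.log_le_log hp0 hpq
      have h2 : Real.log (1 - q) ≤ Real.log (1 - p) :=
        Real.log_le_log h1q (by linarith)
      have : t ≤ 1 := by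
        rw [htdef, div_le_one hL]; rw [hLdef]; linarith
      linarith
    · have hexp : (1 : ℝ) - (1 - t) = t := by ring
      rw [hexp]
      have h1 : (1 - p) ^ t = p ^ t * ((1 - q) / q) := by
        rw [Real.rpow_def_of_pos h1p, Real.rpow_def_of_pos hp0,
          show (1 - q) / q = Real.exp (Real.log ((1 - q) / q)) from
            (Real.exp_log (by positivity)).symm, ← Real.exp_add]
        congr 1
        rw [Real.log_div (ne_of_gt h1q) (ne_of_gt hq0)]
        linear_combination htL - t * hLdef
      have hS : p ^ t + (1 - p) ^ t = p ^ t / q := by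
        rw [h1]; field_simp; ring
      have hApos : (0:ℝ) < p ^ t := Real.rpow_pos_of_pos hp0 t
      have hlogS : Real.log (p ^ t + (1 - p) ^ t) = t * Real.log p - Real.log q := by
        rw [hS, Real.log_div (ne_of_gt hApos) (ne_of_gt hq0), Real.log_rpow hp0]
      rw [hlogS, hKey, hbinD]
      linear_combination (1 - q) * t * hLdef - (1 - q) * htL
  · -- upper bound via weighted AM-GM
    rintro y ⟨l, hl, rfl⟩
    set A : ℝ := p ^ ((1:ℝ) - l) with hAdef
    set B : ℝ := (1 - p) ^ ((1:ℝ) - l) with hBdef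
    have hA : 0 < A := Real.rpow_pos_of_pos hp0 _
    have hB : 0 < B := Real.rpow_pos_of_pos h1p _
    have amgm : (A / q) ^ q * (B / (1 - q)) ^ (1 - q)
        ≤ q * (A / q) + (1 - q) * (B / (1 - q)) :=
      Real.geom_mean_le_arith_mean2_weighted hq0.le h1q.le
        (by positivity) (by positivity) (by ring)
    have hsum : q * (A / q) + (1 - q) * (B / (1 - q)) = A + B := by
      field_simp
    have hpos : (0:ℝ) < (A / q) ^ q * (B / (1 - q)) ^ (1 - q) := by positivity
    have hle : Real.log ((A / q) ^ q * (B / (1 - q)) ^ (1 - q)) ≤ Real.log (A + B) :=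
      Real.log_le_log hpos (by rw [← hsum]; exact amgm)
    have hlhs : Real.log ((A / q) ^ q * (B / (1 - q)) ^ (1 - q))
        = q * (((1:ℝ) - l) * Real.log p - Real.log q)
          + (1 - q) * (((1:ℝ) - l) * Real.log (1 - p) - Real.log (1 - q)) := by
      rw [Real.log_mul (by positivity) (by positivity),
        Real.log_rpow (by positivity), Real.log_rpow (by positivity),
        Real.log_div (ne_of_gt hA) (ne_of_gt hq0),
        Real.log_div (ne_of_gt hB) (ne_of_gt h1q),
        hAdef, hBdef, Real.log_rpow hp0, Real.log_rpow h1p]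
    have hlog : q * (((1:ℝ) - l) * Real.log p - Real.log q)
          + (1 - q) * (((1:ℝ) - l) * Real.log (1 - p) - Real.log (1 - q))
        ≤ Real.log (A + B) := by rw [← hlhs]; exact hle
    rw [hKey, hbinD]
    have hident : l * (-(q * Real.log p + (1 - q) * Real.log (1 - p)))
          - Real.log (A + B)
        = (q * Real.log q + (1 - q) * Real.log (1 - q)
            - (q * Real.log p + (1 - q) * Real.log (1 - p)))
          - (Real.log (A + B)
            - (q * (((1:ℝ) - l) * Real.log p - Real.log q)
              + (1 - q) * (((1:ℝ) - l) * Real.log (1 - p) - Real.log (1 - q)))) := by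
      ring
    rw [hident]
    linarith
end

section
/- Left NEP with respect to relative entropy (Chernoff part): Let $x^n$ be a fixed sequence from finite alphabet $\mathcal{X}$ with type $t$ (i.e., $nt(a)$ counts occurrences of $a$ in $x^n$), assumed of full support. Then $\Pr\{\frac{1}{n}\ln\frac{p(Y^n|x^n)}{q_t(Y^n)} \leq I(t;P) - \delta \mid X^n = x^n\} \leq e^{-n r_-(t,\delta)}$, where $q_t(y) = \sum_x t(x)p(y|x)$, $I(t;P) = \sum_x t(x)\sum_y p(y|x)\ln\frac{p(y|x)}{q_t(y)}$, and $r_-(t,\delta) = \sup_{\lambda\geq 0}[\lambda(\delta - I(t;P)) - \sum_x t(x)\ln\sum_y p(y|x)(p(y|x)/q_t(y))^{-\lambda}]$. -/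
open scoped BigOperators

lemma pi_tsum_ennreal {β : Type} [Countable β] :
    ∀ (n : ℕ) (f : Fin n → β → ENNReal),
      ∑' g : Fin n → β, ∏ i, f i (g i) = ∏ i, ∑' y, f i y := by
  intro n
  induction n with
  | zero =>
    intro f
    simp only [Finset.univ_eq_empty, Finset.prod_empty]
    exact tsum_eq_single (fun i => i.elim0) (by intro b hb; exact absurd (Subsingleton.elim b _) hb)
  | succ n ih =>
    intro f
    rw [← Equiv.tsum_eq (Fin.consEquiv fun _ => β) (fun g => ∏ i, f i (g i))]
    simp only [Fin.consEquiv_apply]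
    have h1 : ∀ p : β × (Fin n → β), (∏ i : Fin (n+1), f i (Fin.cons (α := fun _ => β) p.1 p.2 i))
        = f 0 p.1 * ∏ i : Fin n, f i.succ (p.2 i) := by
      intro p
      rw [Fin.prod_univ_succ, Fin.cons_zero]
      exact congrArg _ (Finset.prod_congr rfl fun i _ => by rw [Fin.cons_succ])
    rw [tsum_congr h1]
    rw [show (∑' b : β × (Fin n → β), f 0 b.1 * ∏ i : Fin n, f i.succ (b.2 i))
        = ∑' a : β, ∑' c : Fin n → β, f 0 a * ∏ i : Fin n, f i.succ (c i) from ENNReal.tsum_prod (f := fun (a : β) (c : Fin n → β) => f 0 a * ∏ i : Fin n, f i.succ (c i))]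
    have h2 : ∀ a : β, (∑' g : Fin n → β, f 0 a * ∏ i : Fin n, f i.succ (g i))
        = f 0 a * ∑' g : Fin n → β, ∏ i : Fin n, f i.succ (g i) := fun a => ENNReal.tsum_mul_left
    rw [tsum_congr h2, ENNReal.tsum_mul_right, ih, Fin.prod_univ_succ]

lemma pi_hasSum {β : Type} [Countable β] (n : ℕ) (f : Fin n → β → ℝ)
    (h0 : ∀ i y, 0 ≤ f i y) (hs : ∀ i, Summable (f i)) :
    HasSum (fun g : Fin n → β => ∏ i, f i (g i)) (∏ i, ∑' y, f i y) := by
  set f' : Fin n → β → ENNReal := fun i y => ENNReal.ofReal (f i y) with hf'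
  have hto : ∀ g : Fin n → β, (∏ i, f' i (g i)).toReal = ∏ i, f i (g i) := by
    intro g
    rw [ENNReal.toReal_prod]
    exact Finset.prod_congr rfl fun i _ => ENNReal.toReal_ofReal (h0 i (g i))
  have hsum' : ∀ i, ∑' y, f' i y = ENNReal.ofReal (∑' y, f i y) :=
    fun i => (ENNReal.ofReal_tsum_of_nonneg (h0 i) (hs i)).symm
  have hT : ∑' g : Fin n → β, ∏ i, f' i (g i) = ∏ i, ∑' y, f' i y := pi_tsum_ennreal n f'
  have hfin : (∏ i, ∑' y, f' i y) ≠ ⊤ := by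
    rw [Finset.prod_congr rfl fun i _ => hsum' i]
    exact (ENNReal.prod_lt_top fun i _ => ENNReal.ofReal_lt_top).ne
  have hsummable : Summable (fun g : Fin n → β => ∏ i, f i (g i)) := by
    have := ENNReal.summable_toReal (hT ▸ hfin)
    simpa only [hto] using this
  have htsum : ∑' g : Fin n → β, ∏ i, f i (g i) = ∏ i, ∑' y, f i y := by
    have hne : ∀ g : Fin n → β, (∏ i, f' i (g i)) ≠ ⊤ :=
      fun g => (ENNReal.prod_lt_top fun i _ => ENNReal.ofReal_lt_top).ne
    have h1 := ENNReal.tsum_toReal_eq hne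
    rw [hT] at h1
    have h2 : (∏ i, ∑' y, f' i y).toReal = ∏ i, ∑' y, f i y := by
      rw [Finset.prod_congr rfl fun i _ => hsum' i, ENNReal.toReal_prod]
      exact Finset.prod_congr rfl fun i _ => ENNReal.toReal_ofReal (tsum_nonneg (h0 i))
    rw [← h2, h1]
    exact tsum_congr fun g => (hto g).symm
  exact htsum ▸ hsummable.hasSum

lemma chernoff_step {α β : Type} [Fintype α] [DecidableEq α] [Countable β]
    (pc : α → β → ℝ) (hpc0 : ∀ a y, 0 ≤ pc a y)
    (n : ℕ) (hn : 0 < n) (xs : Fin n → α) (t : α → ℝ)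
    (ht : ∀ a, t a = ((Finset.univ.filter fun i => xs i = a).card : ℝ) / n)
    (htpos : ∀ a, 0 < t a)
    (hex : ∀ a, ∃ y, 0 < pc a y)
    (I δ : ℝ) (l : ℝ) (hl : 0 ≤ l)
    (hls : ∀ a, Summable (fun y => pc a y * (pc a y / (∑ b, t b * pc b y)) ^ (-l))) :
    (∑' ys : Fin n → β, Set.indicator {ys : Fin n → β |
        (1 / (n : ℝ)) * Real.log (∏ i, pc (xs i) (ys i) / (∑ b, t b * pc b (ys i))) ≤ I - δ}
      (fun ys => ∏ i, pc (xs i) (ys i)) ys)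
    ≤ Real.exp (-(n : ℝ) * (l * (δ - I)
        - ∑ a, t a * Real.log (∑' y, pc a y * (pc a y / (∑ b, t b * pc b y)) ^ (-l)))) := by
  classical
  have hn' : (0:ℝ) < n := Nat.cast_pos.mpr hn
  set q : β → ℝ := fun y => ∑ b, t b * pc b y with hqdef
  have hq : ∀ z, (∑ b, t b * pc b z) = q z := fun z => rfl
  simp only [hq] at hls ⊢
  have hq0 : ∀ y, 0 ≤ q y :=
    fun y => Finset.sum_nonneg fun b _ => mul_nonneg (htpos b).le (hpc0 b y)
  have hqpos : ∀ a y, 0 < pc a y → 0 < q y := fun a y h =>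
    Finset.sum_pos' (fun b _ => mul_nonneg (htpos b).le (hpc0 b y))
      ⟨a, Finset.mem_univ a, mul_pos (htpos a) h⟩
  set g : α → β → ℝ := fun a y => pc a y * (pc a y / q y) ^ (-l) with hgdef
  have hg0 : ∀ a y, 0 ≤ g a y := fun a y =>
    mul_nonneg (hpc0 a y) (Real.rpow_nonneg (div_nonneg (hpc0 a y) (hq0 y)) _)
  set M : α → ℝ := fun a => ∑' y, g a y with hMdef
  have hMpos : ∀ a, 0 < M a := by
    intro a
    obtain ⟨y0, hy0⟩ := hex a
    have hgy0 : 0 < g a y0 :=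
      mul_pos hy0 (Real.rpow_pos_of_pos (div_pos hy0 (hqpos a y0 hy0)) _)
    exact lt_of_lt_of_le hgy0 (Summable.le_tsum (hls a) y0 fun y' _ => hg0 a y')
  set c : ℝ := (n:ℝ) * l * (I - δ) with hc
  have hGsum : HasSum (fun ys : Fin n → β => ∏ i, g (xs i) (ys i)) (∏ i, M (xs i)) :=
    pi_hasSum n (fun i => g (xs i)) (fun i y => hg0 _ y) (fun i => hls _)
  have hGsum' : HasSum (fun ys : Fin n → β => Real.exp c * ∏ i, g (xs i) (ys i))
      (Real.exp c * ∏ i, M (xs i)) := hGsum.mul_left _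
  have hpt : ∀ ys : Fin n → β,
      Set.indicator {ys : Fin n → β |
        (1 / (n : ℝ)) * Real.log (∏ i, pc (xs i) (ys i) / q (ys i)) ≤ I - δ}
        (fun ys => ∏ i, pc (xs i) (ys i)) ys
      ≤ Real.exp c * ∏ i, g (xs i) (ys i) := by
    intro ys
    have hGpt : 0 ≤ Real.exp c * ∏ i, g (xs i) (ys i) :=
      mul_nonneg (Real.exp_nonneg c) (Finset.prod_nonneg fun i _ => hg0 _ _)
    by_cases hmem : ys ∈ {ys : Fin n → β |
        (1 / (n : ℝ)) * Real.log (∏ i, pc (xs i) (ys i) / q (ys i)) ≤ I - δ}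
    · rw [Set.indicator_of_mem hmem]
      by_cases hz : ∀ i, 0 < pc (xs i) (ys i)
      · have hr : ∀ i, 0 < pc (xs i) (ys i) / q (ys i) :=
          fun i => div_pos (hz i) (hqpos _ _ (hz i))
        have hP : 0 < ∏ i, pc (xs i) (ys i) / q (ys i) :=
          Finset.prod_pos fun i _ => hr i
        have hmem' : (1 / (n : ℝ)) * Real.log (∏ i, pc (xs i) (ys i) / q (ys i)) ≤ I - δ :=
          hmem
        have hlog : Real.log (∏ i, pc (xs i) (ys i) / q (ys i)) ≤ (n:ℝ) * (I - δ) := by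
          calc Real.log (∏ i, pc (xs i) (ys i) / q (ys i))
              = (n:ℝ) * ((1 / (n:ℝ)) * Real.log (∏ i, pc (xs i) (ys i) / q (ys i))) := by
                field_simp
            _ ≤ (n:ℝ) * (I - δ) := mul_le_mul_of_nonneg_left hmem' hn'.le
        have h1 : 1 ≤ Real.exp c * (∏ i, pc (xs i) (ys i) / q (ys i)) ^ (-l) := by
          rw [Real.rpow_def_of_pos hP, ← Real.exp_add, ← Real.exp_zero]
          apply Real.exp_le_exp.mpr
          have h2 := mul_le_mul_of_nonneg_left hlog hl
          rw [hc]
          nlinarith [h2]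
        have hprodg : ∏ i, g (xs i) (ys i)
            = (∏ i, pc (xs i) (ys i)) * (∏ i, pc (xs i) (ys i) / q (ys i)) ^ (-l) := by
          rw [← Real.finset_prod_rpow Finset.univ _ (fun i _ => (hr i).le) (-l),
            ← Finset.prod_mul_distrib]
        calc ∏ i, pc (xs i) (ys i) = (∏ i, pc (xs i) (ys i)) * 1 := (mul_one _).symm
          _ ≤ (∏ i, pc (xs i) (ys i))
              * (Real.exp c * (∏ i, pc (xs i) (ys i) / q (ys i)) ^ (-l)) :=
            mul_le_mul_of_nonneg_left h1 (Finset.prod_nonneg fun i _ => hpc0 _ _)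
          _ = Real.exp c * ∏ i, g (xs i) (ys i) := by rw [hprodg]; ring
      · push_neg at hz
        obtain ⟨i0, hi0⟩ := hz
        have : pc (xs i0) (ys i0) = 0 := le_antisymm hi0 (hpc0 _ _)
        rw [Finset.prod_eq_zero (Finset.mem_univ i0) this]
        exact hGpt
    · rw [Set.indicator_of_notMem hmem]
      exact hGpt
  have hFnonneg : ∀ ys : Fin n → β, 0 ≤ Set.indicator {ys : Fin n → β |
        (1 / (n : ℝ)) * Real.log (∏ i, pc (xs i) (ys i) / q (ys i)) ≤ I - δ}
        (fun ys => ∏ i, pc (xs i) (ys i)) ys :=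
    fun ys => Set.indicator_nonneg
      (fun z _ => Finset.prod_nonneg fun i _ => hpc0 _ _) ys
  have hFsum : Summable (fun ys : Fin n → β => Set.indicator {ys : Fin n → β |
        (1 / (n : ℝ)) * Real.log (∏ i, pc (xs i) (ys i) / q (ys i)) ≤ I - δ}
        (fun ys => ∏ i, pc (xs i) (ys i)) ys) :=
    Summable.of_nonneg_of_le hFnonneg hpt hGsum'.summable
  have step1 := Summable.tsum_le_tsum hpt hFsum hGsum'.summable
  rw [hGsum'.tsum_eq] at step1
  refine step1.trans (le_of_eq ?_)
  -- now compute exp c * ∏ i, M (xs i) = RHS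
  have hcnt : ∀ a, ((Finset.univ.filter fun i => xs i = a).card : ℝ) = (n:ℝ) * t a := by
    intro a; rw [ht a]; field_simp
  have himg : Finset.univ.image xs = (Finset.univ : Finset α) := by
    refine Finset.eq_univ_iff_forall.mpr fun a => ?_
    have hpos : (0:ℝ) < ((Finset.univ.filter fun i => xs i = a).card : ℝ) := by
      rw [hcnt a]; exact mul_pos hn' (htpos a)
    have hcard : 0 < (Finset.univ.filter fun i => xs i = a).card := by exact_mod_cast hpos
    obtain ⟨i, hi⟩ := Finset.card_pos.mp hcard
    exact Finset.mem_image.mpr ⟨i, Finset.mem_univ i, (Finset.mem_filter.mp hi).2⟩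
  have hprodM : ∏ i, M (xs i)
      = ∏ a, M a ^ (Finset.univ.filter fun i => xs i = a).card := by
    rw [Finset.prod_comp M xs, himg]
  have hMpow : ∀ a, M a ^ (Finset.univ.filter fun i => xs i = a).card
      = Real.exp (((n:ℝ) * t a) * Real.log (M a)) := by
    intro a
    rw [← hcnt a, Real.exp_nat_mul, Real.exp_log (hMpos a)]
  have hsum_eq : (∑ a, ((n:ℝ) * t a) * Real.log (M a))
      = (n:ℝ) * ∑ a, t a * Real.log (M a) := by
    rw [Finset.mul_sum]; exact Finset.sum_congr rfl fun a _ => by ring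
  calc Real.exp c * ∏ i, M (xs i)
      = Real.exp c * ∏ a, Real.exp (((n:ℝ) * t a) * Real.log (M a)) := by
        rw [hprodM]; exact congrArg _ (Finset.prod_congr rfl fun a _ => hMpow a)
    _ = Real.exp c * Real.exp (∑ a, ((n:ℝ) * t a) * Real.log (M a)) := by
        rw [Real.exp_sum]
    _ = Real.exp (c + (n:ℝ) * ∑ a, t a * Real.log (M a)) := by
        rw [← Real.exp_add, hsum_eq]
    _ = Real.exp (-(n:ℝ) * (l * (δ - I) - ∑ a, t a * Real.log (M a))) := by
        congr 1; rw [hc]; ring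

/-- Left NEP with respect to relative entropy (Chernoff part): for a channel
`P = {p(y|x)}` with finite input alphabet, a fixed input sequence `x^n` with full
support type `t`, the output mixture `q_t(y) = Σ_x t(x) p(y|x)` and
`I(t;P) = Σ_x t(x) Σ_y p(y|x) ln(p(y|x)/q_t(y))`, one has
`Pr{(1/n) ln (p(Y^n|x^n)/q_t(Y^n)) ≤ I(t;P) - δ | X^n = x^n} ≤ e^{-n r_-(t,δ)}`,
where `r_-(t,δ) = sup_{λ≥0}[λ(δ - I(t;P)) - Σ_x t(x) ln Σ_y p(y|x)(p(y|x)/q_t(y))^{-λ}]`. -/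
theorem stmt17 {α β : Type} [Fintype α] [DecidableEq α] [Countable β]
    (pc : α → β → ℝ)
    (hpc0 : ∀ a y, 0 ≤ pc a y) (hpc1 : ∀ a, HasSum (pc a) 1)
    (n : ℕ) (hn : 0 < n) (xs : Fin n → α)
    (t : α → ℝ)
    (ht : ∀ a, t a = ((Finset.univ.filter fun i => xs i = a).card : ℝ) / n)
    (htpos : ∀ a, 0 < t a)
    (DD : α → ℝ)
    (hDD : ∀ a, HasSum
        (fun y => pc a y * Real.log (pc a y / (∑ b, t b * pc b y))) (DD a))
    (δ : ℝ) (hδ : 0 ≤ δ) :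
    (∑' ys : Fin n → β,
        Set.indicator {ys : Fin n → β |
            (1 / (n : ℝ))
                * Real.log (∏ i, pc (xs i) (ys i) / (∑ b, t b * pc b (ys i)))
              ≤ (∑ a, t a * DD a) - δ}
          (fun ys => ∏ i, pc (xs i) (ys i)) ys)
      ≤ Real.exp (-(n : ℝ) *
          sSup {v : ℝ | ∃ l : ℝ, 0 ≤ l ∧
            (∀ a, Summable
              (fun y => pc a y * (pc a y / (∑ b, t b * pc b y)) ^ (-l))) ∧
            v = l * (δ - ∑ a, t a * DD a)
                - ∑ a, t a * Real.log
                    (∑' y, pc a y * (pc a y / (∑ b, t b * pc b y)) ^ (-l))}) := by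
  classical
  have hex : ∀ a, ∃ y, 0 < pc a y := by
    intro a
    by_contra h
    push_neg at h
    have hz : pc a = fun _ => 0 := funext fun y => le_antisymm (h y) (hpc0 a y)
    have := (hz ▸ hpc1 a).unique hasSum_zero
    exact one_ne_zero this
  set S : Set ℝ := {v : ℝ | ∃ l : ℝ, 0 ≤ l ∧
      (∀ a, Summable
        (fun y => pc a y * (pc a y / (∑ b, t b * pc b y)) ^ (-l))) ∧
      v = l * (δ - ∑ a, t a * DD a)
          - ∑ a, t a * Real.log
              (∑' y, pc a y * (pc a y / (∑ b, t b * pc b y)) ^ (-l))} with hS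
  have key : ∀ v ∈ S, (∑' ys : Fin n → β,
        Set.indicator {ys : Fin n → β |
            (1 / (n : ℝ))
                * Real.log (∏ i, pc (xs i) (ys i) / (∑ b, t b * pc b (ys i)))
              ≤ (∑ a, t a * DD a) - δ}
          (fun ys => ∏ i, pc (xs i) (ys i)) ys) ≤ Real.exp (-(n:ℝ) * v) := by
    rintro v ⟨l, hl, hls, rfl⟩
    exact chernoff_step pc hpc0 n hn xs t ht htpos hex (∑ a, t a * DD a) δ l hl hls
  have h0S : (0:ℝ) ∈ S := by
    refine ⟨0, le_refl 0, ?_, ?_⟩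
    · intro a
      simp only [neg_zero, Real.rpow_zero, mul_one]
      exact (hpc1 a).summable
    · simp only [neg_zero, Real.rpow_zero, mul_one, zero_mul, zero_sub]
      rw [show (∑ a, t a * Real.log (∑' y, pc a y)) = 0 from
        Finset.sum_eq_zero fun a _ => by rw [(hpc1 a).tsum_eq, Real.log_one, mul_zero]]
      ring
  by_cases hbdd : BddAbove S
  · have hne : S.Nonempty := ⟨0, h0S⟩
    have cont : ContinuousAt (fun v : ℝ => Real.exp (-(n:ℝ) * v)) (sSup S) :=
      (Real.continuous_exp.comp (continuous_const.mul continuous_id)).continuousAt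
    have anti : Antitone (fun v : ℝ => Real.exp (-(n:ℝ) * v)) := by
      intro u v huv
      apply Real.exp_le_exp.mpr
      have : (0:ℝ) ≤ n := Nat.cast_nonneg n
      nlinarith
    rw [Antitone.map_csSup_of_continuousAt cont anti hne hbdd]
    refine le_csInf (hne.image _) ?_
    rintro b ⟨v, hv, rfl⟩
    exact key v hv
  · rw [Real.sSup_of_not_bddAbove hbdd]
    simpa using key 0 h0S
end

section
/- For an IID source over a finite alphabet $\mathcal{X}$ satisfying $\sigma_H^2(X) > 0$, the rate function satisfies $r_X(\delta) < \delta$ for all $\delta \in (0, \ln|\mathcal{X}| - H(X))$. Consequently $r_X'(\delta) < 1$ on this interval. -/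
open scoped BigOperators

section Aux

open Real Finset Set Filter

lemma jensen_exp {α : Type} [Fintype α] (w t : α → ℝ) (hw : ∀ x, 0 ≤ w x)
    (hw1 : ∑ x, w x = 1) :
    Real.exp (∑ x, w x * t x) ≤ ∑ x, w x * Real.exp (t x) := by
  have h := convexOn_exp.map_sum_le (t := Finset.univ) (w := w) (p := t)
    (fun i _ => hw i) hw1 (fun i _ => Set.mem_univ _)
  simpa [smul_eq_mul] using h

lemma jensen_log {α : Type} [Fintype α] (w t : α → ℝ) (hw : ∀ x, 0 ≤ w x)
    (hw1 : ∑ x, w x = 1) (ht : ∀ x, 0 < t x) :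
    ∑ x, w x * Real.log (t x) ≤ Real.log (∑ x, w x * t x) := by
  have h := (strictConcaveOn_log_Ioi.concaveOn).le_map_sum (t := Finset.univ)
    (w := w) (p := t) (fun i _ => hw i) hw1 (fun i _ => ht i)
  simpa [smul_eq_mul] using h

end Aux

set_option maxHeartbeats 1000000 in
open Real Finset Set Filter in
/-- For an IID source over a finite alphabet with full-support pmf `p`,
entropy `H(X) < ln|𝒳|` and `σ_H²(X) > 0`, the rate function satisfies
`r_X(δ) < δ` for all `δ ∈ (0, ln|𝒳| - H(X))`, and consequently `r_X'(δ) < 1`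
on this interval. -/
theorem stmt19 {α : Type} [Fintype α] (p : α → ℝ)
    (hp0 : ∀ x, 0 < p x) (hp1 : ∑ x, p x = 1)
    (H S2 : ℝ)
    (hH : H = ∑ x, p x * (-Real.log (p x)))
    (hS2 : S2 = ∑ x, p x * (Real.log (p x)) ^ 2)
    (hvar : 0 < S2 - H ^ 2)
    (hHlt : H < Real.log (Fintype.card α)) :
    ∀ δ : ℝ, 0 < δ → δ < Real.log (Fintype.card α) - H →
      rateR p H δ < δ ∧ derivWithin (rateR p H) (Set.Ici 0) δ < 1 := by
  classical
  intro δ hδ0 hδD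
  have hne : Nonempty α := by
    by_contra h
    rw [not_nonempty_iff] at h
    rw [Finset.univ_eq_empty, Finset.sum_empty] at hp1
    norm_num at hp1
  have hcard : 0 < Fintype.card α := Fintype.card_pos
  set n : ℝ := (Fintype.card α : ℝ) with hn
  have hn0 : 0 < n := by rw [hn]; exact_mod_cast hcard
  set C : ℝ := Real.log n with hC
  set μ : ℝ := (∑ x, -Real.log (p x)) / n with hμ
  set Λ : ℝ → ℝ := fun l => ∑ x, p x * p x ^ (-l) with hΛdef
  have hterm1 : ∀ (l : ℝ) (x : α), p x * p x ^ (-l) = p x * Real.exp (-l * Real.log (p x)) := by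
    intro l x
    rw [Real.rpow_def_of_pos (hp0 x), mul_comm (Real.log (p x)) (-l)]
  have hterm2 : ∀ (l : ℝ) (x : α), p x * p x ^ (-l) = Real.exp ((1 - l) * Real.log (p x)) := by
    intro l x
    rw [Real.rpow_def_of_pos (hp0 x)]
    rw [show p x * Real.exp (Real.log (p x) * -l)
        = Real.exp (Real.log (p x)) * Real.exp (Real.log (p x) * -l) by
      rw [Real.exp_log (hp0 x)]]
    rw [← Real.exp_add]
    congr 1
    ring
  have hΛpos : ∀ l : ℝ, 0 < Λ l := by
    intro l
    rw [hΛdef]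
    exact Finset.sum_pos (fun x _ => mul_pos (hp0 x) (Real.rpow_pos_of_pos (hp0 x) _))
      Finset.univ_nonempty
  -- Jensen bound 1 : exp (l*H) ≤ Λ l
  have hJ1 : ∀ l : ℝ, Real.exp (l * H) ≤ Λ l := by
    intro l
    have h := jensen_exp p (fun x => -l * Real.log (p x)) (fun x => (hp0 x).le) hp1
    have e1 : ∑ x, p x * (-l * Real.log (p x)) = l * H := by
      rw [hH, Finset.mul_sum]
      exact Finset.sum_congr rfl fun x _ => by ring
    have e2 : ∑ x, p x * Real.exp (-l * Real.log (p x)) = Λ l := by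
      rw [hΛdef]
      exact Finset.sum_congr rfl fun x _ => (hterm1 l x).symm
    rw [e1, e2] at h
    exact h
  -- Jensen bound 2 : n * exp ((l-1)*μ) ≤ Λ l
  have hSneg : (∑ x, -Real.log (p x)) = -∑ x, Real.log (p x) := by simp
  have hJ2 : ∀ l : ℝ, n * Real.exp ((l - 1) * μ) ≤ Λ l := by
    intro l
    have h := jensen_exp (fun _ : α => 1 / n) (fun x => (1 - l) * Real.log (p x))
      (fun _ => by positivity) (by
        rw [Finset.sum_const, Finset.card_univ, nsmul_eq_mul, ← hn]
        field_simp)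
    have e1 : ∑ x, (1 / n) * ((1 - l) * Real.log (p x)) = (l - 1) * μ := by
      have h1 : ∑ x, (1 / n) * ((1 - l) * Real.log (p x))
          = ((1 - l) / n) * ∑ x, Real.log (p x) := by
        rw [Finset.mul_sum]
        exact Finset.sum_congr rfl fun x _ => by ring
      rw [h1, hμ, hSneg]
      field_simp
      ring
    have e2 : ∑ x, (1 / n) * Real.exp ((1 - l) * Real.log (p x)) = (1 / n) * Λ l := by
      rw [hΛdef, Finset.mul_sum]
      exact Finset.sum_congr rfl fun x _ => by rw [← hterm2 l x]
    rw [e1, e2] at h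
    calc n * Real.exp ((l - 1) * μ) ≤ n * ((1 / n) * Λ l) :=
          mul_le_mul_of_nonneg_left h hn0.le
      _ = Λ l := by field_simp
  -- AM-GM : C ≤ μ
  have hCμ : C ≤ μ := by
    have h := jensen_log (fun _ : α => 1 / n) p (fun _ => by positivity) (by
        rw [Finset.sum_const, Finset.card_univ, nsmul_eq_mul, ← hn]
        field_simp) hp0
    have e1 : ∑ x, (1 / n) * Real.log (p x) = (∑ x, Real.log (p x)) / n := by
      rw [← Finset.mul_sum, one_div, inv_mul_eq_div]
    have e2 : ∑ x, (1 / n) * p x = 1 / n := by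
      rw [← Finset.mul_sum, hp1, mul_one]
    rw [e1, e2, one_div, Real.log_inv, ← hC] at h
    rw [hμ, hSneg, neg_div]
    linarith
  -- logarithmic lower bounds on log (Λ l)
  have hlog1 : ∀ l : ℝ, l * H ≤ Real.log (Λ l) := fun l =>
    (Real.le_log_iff_exp_le (hΛpos l)).2 (hJ1 l)
  have hlog2 : ∀ l : ℝ, C + (l - 1) * μ ≤ Real.log (Λ l) := by
    intro l
    refine (Real.le_log_iff_exp_le (hΛpos l)).2 ?_
    rw [Real.exp_add, hC, Real.exp_log hn0]
    exact hJ2 l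
  -- rewriting the rate function via Λ
  have hrate : ∀ d : ℝ, rateR p H d
      = sSup {y : ℝ | ∃ l : ℝ, 0 ≤ l ∧ y = l * (H + d) - Real.log (Λ l)} := by
    intro d
    unfold rateR
    congr 1
    ext y
    simp only [Set.mem_setOf_eq, tsum_fintype, hΛdef]
    constructor
    · rintro ⟨l, hl, -, h⟩; exact ⟨l, hl, h⟩
    · rintro ⟨l, hl, h⟩; exact ⟨l, hl, Summable.of_finite, h⟩
  have hB0 : ∀ d : ℝ, (0 : ℝ) ∈ {y : ℝ | ∃ l : ℝ, 0 ≤ l ∧ y = l * (H + d) - Real.log (Λ l)} := by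
    intro d
    refine ⟨0, le_rfl, ?_⟩
    have hΛ0 : Λ 0 = 1 := by
      simp only [hΛdef, neg_zero, Real.rpow_zero, mul_one]
      exact hp1
    rw [hΛ0, Real.log_one]
    ring
  -- linear upper bound on the exponent for small l
  have hub1 : ∀ (d l : ℝ), 0 ≤ l → l * (H + d) - Real.log (Λ l) ≤ l * d := by
    intro d l hl
    have h1 := hlog1 l
    nlinarith
  -- the key slope construction
  have hLdef : ∀ d : ℝ, H + d < C → ∃ L : ℝ, 0 ≤ L ∧ L < 1 ∧
      (∀ d'' l : ℝ, 0 ≤ l → d'' ≤ d → L ≤ l → l * (H + d'') - Real.log (Λ l) ≤ 0) := by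
    intro d hd
    have hμd : H + d < μ := lt_of_lt_of_le hd hCμ
    refine ⟨1 - (C - H - d) / (μ - H - d), ?_, ?_, ?_⟩
    · have h1 : (C - H - d) ≤ (μ - H - d) := by linarith
      have h2 : (C - H - d) / (μ - H - d) ≤ 1 := by
        rw [div_le_one (by linarith)]
        exact h1
      linarith
    · have h2 : 0 < (C - H - d) / (μ - H - d) := div_pos (by linarith) (by linarith)
      linarith
    · intro d'' l hl hd'' hLl
      have h2 := hlog2 l
      have hq : (1 - l) * (μ - H - d) ≤ C - H - d := by
        have h3 : 1 - l ≤ (C - H - d) / (μ - H - d) := by linarith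
        calc (1 - l) * (μ - H - d) ≤ ((C - H - d) / (μ - H - d)) * (μ - H - d) :=
              mul_le_mul_of_nonneg_right h3 (by linarith)
          _ = C - H - d := div_mul_cancel₀ _ (by linarith)
      nlinarith [mul_le_mul_of_nonneg_left hd'' hl]
  -- instantiate at δ
  obtain ⟨L, hL0, hL1, hLkey⟩ := hLdef δ (by linarith)
  have hbound : ∀ y ∈ {y : ℝ | ∃ l : ℝ, 0 ≤ l ∧ y = l * (H + δ) - Real.log (Λ l)},
      y ≤ L * δ := by
    rintro y ⟨l, hl, rfl⟩
    rcases le_total l L with h | h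
    · have h1 := hub1 δ l hl
      have h2 : l * δ ≤ L * δ := mul_le_mul_of_nonneg_right h hδ0.le
      linarith
    · have h1 := hLkey δ l hl le_rfl h
      nlinarith [mul_nonneg hL0 hδ0.le]
  have hbdd : BddAbove {y : ℝ | ∃ l : ℝ, 0 ≤ l ∧ y = l * (H + δ) - Real.log (Λ l)} :=
    ⟨L * δ, hbound⟩
  have hrlt : rateR p H δ < δ := by
    rw [hrate]
    calc sSup {y : ℝ | ∃ l : ℝ, 0 ≤ l ∧ y = l * (H + δ) - Real.log (Λ l)} ≤ L * δ :=
          csSup_le ⟨0, hB0 δ⟩ hbound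
      _ < δ := by nlinarith
  have hr0 : 0 ≤ rateR p H δ := by
    rw [hrate]
    exact le_csSup hbdd (hB0 δ)
  refine ⟨hrlt, ?_⟩
  -- derivative part
  set δ' : ℝ := (δ + (C - H)) / 2 with hδ'
  have hδ'1 : δ < δ' := by rw [hδ']; linarith
  have hδ'2 : H + δ' < C := by rw [hδ']; linarith
  obtain ⟨M, hM0, hM1, hMkey⟩ := hLdef δ' hδ'2
  have hslopebd : ∀ d'' ∈ Set.Ioc δ δ',
      rateR p H d'' ≤ rateR p H δ + M * (d'' - δ) := by
    rintro d'' ⟨h1, h2⟩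
    rw [hrate]
    apply csSup_le ⟨0, hB0 d''⟩
    rintro y ⟨l, hl, rfl⟩
    rcases le_total l M with h | h
    · have hin : l * (H + δ) - Real.log (Λ l) ≤ rateR p H δ := by
        rw [hrate]
        exact le_csSup hbdd ⟨l, hl, rfl⟩
      have h3 : l * (d'' - δ) ≤ M * (d'' - δ) :=
        mul_le_mul_of_nonneg_right h (by linarith)
      nlinarith
    · have h4 := hMkey d'' l hl h2 h
      nlinarith [mul_nonneg hM0 (by linarith : (0:ℝ) ≤ d'' - δ)]
  by_cases hdiff : DifferentiableWithinAt ℝ (rateR p H) (Set.Ici 0) δ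
  · have hIci : Set.Ici (0 : ℝ) ∈ nhds δ := Ici_mem_nhds hδ0
    have hdA : DifferentiableAt ℝ (rateR p H) δ := hdiff.differentiableAt hIci
    rw [derivWithin_of_mem_nhds hIci]
    have hslope := hdA.hasDerivAt
    rw [hasDerivAt_iff_tendsto_slope] at hslope
    have hslope' : Filter.Tendsto (slope (rateR p H) δ) (nhdsWithin δ (Set.Ioi δ))
        (nhds (deriv (rateR p H) δ)) :=
      hslope.mono_left (nhdsWithin_mono _ (fun x hx => ne_of_gt hx))
    have hev : ∀ᶠ x in nhdsWithin δ (Set.Ioi δ), slope (rateR p H) δ x ≤ M := by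
      filter_upwards [Ioc_mem_nhdsGT_of_mem (Set.mem_Ico.mpr ⟨le_rfl, hδ'1⟩)] with x hx
      have hb := hslopebd x hx
      have hxδ : 0 < x - δ := by linarith [hx.1]
      rw [slope_def_field, div_le_iff₀ hxδ]
      linarith
    have hle : deriv (rateR p H) δ ≤ M := le_of_tendsto hslope' hev
    linarith
  · rw [derivWithin_zero_of_not_differentiableWithinAt hdiff]
    norm_num
end
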